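/- arXiv:2011.02972 — 7 statements merged into one kernel-verified Lean document; each statement's English description precedes it below -/
import Mathlib

section
/- For every real n×n matrix A, the squared Frobenius distance from A to the orthogonal group O(n,ℝ) equals n + tr(AᵀA) − 2·tr(√(AᵀA)); that is, inf over B ∈ O(n,ℝ) of tr((A−B)ᵀ(A−B)) = n + tr(AᵀA) − 2·tr(√(AᵀA)). -/
open Matrix

lemma exists_polar {n : ℕ} (A S : Matrix (Fin n) (Fin n) ℝ)
    (hS : S.PosSemidef) (hSS : S * S = Aᵀ * A) :
    ∃ W : Matrix (Fin n) (Fin n) ℝ, Wᵀ * W = 1 ∧ A = W * S := by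
  classical
  let V := EuclideanSpace ℝ (Fin n)
  let a : V →ₗ[ℝ] V := Matrix.toEuclideanLin A
  let s : V →ₗ[ℝ] V := Matrix.toEuclideanLin S
  have hmul : ∀ M N : Matrix (Fin n) (Fin n) ℝ,
      Matrix.toEuclideanLin (M * N) =
        (Matrix.toEuclideanLin M).comp (Matrix.toEuclideanLin N) := by
    intro M N
    rw [Matrix.toEuclideanLin_eq_toLin_orthonormal,
      Matrix.toLin_mul _ (EuclideanSpace.basisFun (Fin n) ℝ).toBasis _]
  have hadj_a : Matrix.toEuclideanLin Aᵀ = LinearMap.adjoint a := by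
    rw [← Matrix.toEuclideanLin_conjTranspose_eq_adjoint,
      Matrix.conjTranspose_eq_transpose_of_trivial]
  have hs_adj : LinearMap.adjoint s = s := by
    rw [← Matrix.toEuclideanLin_conjTranspose_eq_adjoint, hS.1]
  have hnorm : ∀ x : V, ‖a x‖ = ‖s x‖ := by
    intro x
    have h1 : (inner ℝ (a x) (a x) : ℝ) = inner ℝ (s x) (s x) := by
      rw [← LinearMap.adjoint_inner_left a, ← LinearMap.comp_apply, ← hadj_a, ← hmul, ← hSS,
        hmul, LinearMap.comp_apply]
      rw [show Matrix.toEuclideanLin S = s from rfl, ← hs_adj, LinearMap.adjoint_inner_left,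
        hs_adj]
    have h2 : Real.sqrt (inner ℝ (a x) (a x)) = Real.sqrt (inner ℝ (s x) (s x)) := by rw [h1]
    rwa [real_inner_self_eq_norm_sq, real_inner_self_eq_norm_sq,
      Real.sqrt_sq (norm_nonneg _), Real.sqrt_sq (norm_nonneg _)] at h2
  have hker : LinearMap.ker s ≤ LinearMap.ker a := by
    intro x hx
    simp only [LinearMap.mem_ker] at hx ⊢
    have := hnorm x
    rw [hx, norm_zero, norm_eq_zero] at this
    exact this
  let abar : (V ⧸ LinearMap.ker s) →ₗ[ℝ] V := (LinearMap.ker s).liftQ a hker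
  let f₀ : LinearMap.range s →ₗ[ℝ] V :=
    abar.comp (s.quotKerEquivRange.symm : LinearMap.range s →ₗ[ℝ] V ⧸ LinearMap.ker s)
  have hf₀ : ∀ x : V, f₀ ⟨s x, LinearMap.mem_range_self s x⟩ = a x := by
    intro x
    have h1 : s.quotKerEquivRange (Submodule.Quotient.mk x) =
        ⟨s x, LinearMap.mem_range_self s x⟩ :=
      Subtype.ext (LinearMap.quotKerEquivRange_apply_mk s x)
    have h2 : s.quotKerEquivRange.symm ⟨s x, LinearMap.mem_range_self s x⟩ =
        Submodule.Quotient.mk x := by rw [← h1, LinearEquiv.symm_apply_apply]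
    simp only [f₀, LinearMap.comp_apply, LinearEquiv.coe_coe, h2, abar, Submodule.liftQ_apply]
  have hf₀norm : ∀ y : LinearMap.range s, ‖f₀ y‖ = ‖y‖ := by
    rintro ⟨y, hy⟩
    obtain ⟨x, rfl⟩ := hy
    rw [hf₀ x]
    rw [hnorm x]
    rfl
  let f : LinearMap.range s →ₗᵢ[ℝ] V := ⟨f₀, hf₀norm⟩
  let w := f.extend
  have hw : ∀ x : V, w (s x) = a x := by
    intro x
    have := f.extend_apply ⟨s x, LinearMap.mem_range_self s x⟩
    simpa [w] using this.trans (hf₀ x)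
  set W := Matrix.toEuclideanLin.symm w.toLinearMap with hWdef
  have hW : Matrix.toEuclideanLin W = w.toLinearMap := Matrix.toEuclideanLin.apply_symm_apply _
  have hadjW : Matrix.toEuclideanLin Wᵀ = LinearMap.adjoint (Matrix.toEuclideanLin W) := by
    rw [← Matrix.toEuclideanLin_conjTranspose_eq_adjoint,
      Matrix.conjTranspose_eq_transpose_of_trivial]
  refine ⟨W, ?_, ?_⟩
  · apply Matrix.toEuclideanLin.injective
    rw [hmul, hadjW, hW]
    refine LinearMap.ext fun x => ?_
    refine ext_inner_right ℝ fun y => ?_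
    rw [LinearMap.comp_apply, LinearMap.adjoint_inner_left]
    have h1 : (inner ℝ (w x) (w y) : ℝ) = inner ℝ x y := w.inner_map_map x y
    rw [show w.toLinearMap x = w x from rfl, show w.toLinearMap y = w y from rfl, h1]
    congr 1
    simp [Matrix.toEuclideanLin_apply, Matrix.one_mulVec]
  · apply Matrix.toEuclideanLin.injective
    rw [hmul, hW]
    refine LinearMap.ext fun x => ?_
    exact (hw x).symm

lemma trace_orth_mul_psd_le {n : ℕ} (M S : Matrix (Fin n) (Fin n) ℝ)
    (hM : Mᵀ * M = 1) (hS : S.PosSemidef) :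
    Matrix.trace (M * S) ≤ Matrix.trace S := by
  classical
  open scoped MatrixOrder in
  set R := CFC.sqrt S with hRdef
  open scoped MatrixOrder in
  have hRR : R * R = S := CFC.sqrt_mul_sqrt_self S hS.nonneg
  have hRsymm : Rᵀ = R := by
    open scoped MatrixOrder in
    have h : Rᴴ = R := (CFC.sqrt_nonneg S).posSemidef.1
    rwa [Matrix.conjTranspose_eq_transpose_of_trivial] at h
  have hRsymm' : ∀ i j, R i j = R j i := fun i j =>
    (Matrix.transpose_apply R j i).symm.trans (congrFun (congrFun hRsymm j) i)
  have key : Matrix.trace (M * S) = Matrix.trace (R * M * R) := by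
    rw [← hRR, ← Matrix.mul_assoc, Matrix.trace_mul_cycle]
  rw [key]
  have hdiag : ∀ i, (R * M * R) i i ≤ S i i := by
    intro i
    set u : Fin n → ℝ := fun j => R i j with hu
    set v : Fin n → ℝ := M *ᵥ u with hv
    have h1 : (R * M * R) i i = u ⬝ᵥ v := by
      simp only [Matrix.mul_apply, dotProduct, Matrix.mulVec, hv, hu, dotProduct]
      simp only [Finset.sum_mul, Finset.mul_sum]
      rw [Finset.sum_comm]
      refine Finset.sum_congr rfl fun j _ => Finset.sum_congr rfl fun x _ => ?_
      rw [hRsymm' x i]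
      ring
    have hvv : v ⬝ᵥ v = u ⬝ᵥ u := by
      rw [hv, dotProduct_mulVec, ← Matrix.mulVec_transpose, Matrix.mulVec_mulVec, hM,
        Matrix.one_mulVec]
    have huu : u ⬝ᵥ u = S i i := by
      rw [← hRR, Matrix.mul_apply]
      simp only [dotProduct, hu]
      exact Finset.sum_congr rfl fun j _ => by rw [hRsymm' j i]
    have hCS : (u ⬝ᵥ v) ^ 2 ≤ (u ⬝ᵥ u) * (v ⬝ᵥ v) := by
      simpa [dotProduct, pow_two, Finset.mul_sum] using
        Finset.sum_mul_sq_le_sq_mul_sq Finset.univ u v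
    have huu_nonneg : 0 ≤ u ⬝ᵥ u := Finset.sum_nonneg fun j _ => mul_self_nonneg _
    have : (u ⬝ᵥ v) ^ 2 ≤ (u ⬝ᵥ u) ^ 2 := by
      rw [pow_two (u ⬝ᵥ u)]; rw [hvv] at hCS; exact hCS
    have h2 : u ⬝ᵥ v ≤ u ⬝ᵥ u := by
      nlinarith [huu_nonneg]
    rw [h1, ← huu]; exact h2
  calc Matrix.trace (R * M * R) = ∑ i, (R * M * R) i i := rfl
    _ ≤ ∑ i, S i i := Finset.sum_le_sum fun i _ => hdiag i
    _ = Matrix.trace S := rfl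

lemma expand_dist {n : ℕ} (A B : Matrix (Fin n) (Fin n) ℝ) (hB : Bᵀ * B = 1) :
    Matrix.trace ((A - B)ᵀ * (A - B)) =
      (n : ℝ) + Matrix.trace (Aᵀ * A) - 2 * Matrix.trace (Bᵀ * A) := by
  have h1 : Matrix.trace (Aᵀ * B) = Matrix.trace (Bᵀ * A) := by
    rw [← Matrix.trace_transpose (Aᵀ * B), Matrix.transpose_mul, Matrix.transpose_transpose]
  have h2 : Matrix.trace (Bᵀ * B) = (n : ℝ) := by
    rw [hB, Matrix.trace_one]; simp
  rw [Matrix.transpose_sub, Matrix.sub_mul, Matrix.mul_sub, Matrix.mul_sub,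
    Matrix.trace_sub, Matrix.trace_sub, Matrix.trace_sub, h1, h2]
  ring

/-- For every real n×n matrix A, the squared Frobenius distance from A to the
orthogonal group O(n,ℝ) equals n + tr(AᵀA) − 2·tr(√(AᵀA)).  Here `S` is the unique positive
semidefinite square root of the positive semidefinite matrix AᵀA, encoded by the hypotheses
`hS : S.PosSemidef` and `hSS : S * S = Aᵀ * A`. -/
theorem squared_dist_to_orthogonal_group {n : ℕ} (A S : Matrix (Fin n) (Fin n) ℝ)
    (hS : S.PosSemidef) (hSS : S * S = Aᵀ * A) :
    sInf {x : ℝ | ∃ B : Matrix (Fin n) (Fin n) ℝ, Bᵀ * B = 1 ∧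
        x = Matrix.trace ((A - B)ᵀ * (A - B))} =
      (n : ℝ) + Matrix.trace (Aᵀ * A) - 2 * Matrix.trace S := by
  obtain ⟨W, hW1, hW2⟩ := exists_polar A S hS hSS
  set v : ℝ := (n : ℝ) + Matrix.trace (Aᵀ * A) - 2 * Matrix.trace S with hv
  have hWA : Matrix.trace (Wᵀ * A) = Matrix.trace S := by
    rw [hW2, ← Matrix.mul_assoc, hW1, Matrix.one_mul]
  have hmem : v ∈ {x : ℝ | ∃ B : Matrix (Fin n) (Fin n) ℝ, Bᵀ * B = 1 ∧
      x = Matrix.trace ((A - B)ᵀ * (A - B))} := by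
    refine ⟨W, hW1, ?_⟩
    rw [expand_dist A W hW1, hWA]
  have hlb : ∀ x ∈ {x : ℝ | ∃ B : Matrix (Fin n) (Fin n) ℝ, Bᵀ * B = 1 ∧
      x = Matrix.trace ((A - B)ᵀ * (A - B))}, v ≤ x := by
    rintro x ⟨B, hB, rfl⟩
    rw [expand_dist A B hB]
    have hBA : Matrix.trace (Bᵀ * A) ≤ Matrix.trace S := by
      have hM : (Bᵀ * W)ᵀ * (Bᵀ * W) = 1 := by
        rw [Matrix.transpose_mul, Matrix.transpose_transpose, Matrix.mul_assoc,
          ← Matrix.mul_assoc B Bᵀ W, mul_eq_one_comm.mp hB, Matrix.one_mul, hW1]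
      have h := trace_orth_mul_psd_le (Bᵀ * W) S hM hS
      rw [hW2, ← Matrix.mul_assoc]
      exact h
    linarith
  exact le_antisymm (csInf_le ⟨v, hlb⟩ hmem) (le_csInf ⟨v, hmem⟩ hlb)
end

section
/- For every real n×n matrix A, the supremum over B ∈ O(n,ℝ) of tr(AᵀB) equals tr(√(AᵀA)), and this supremum is attained; moreover if A is invertible it is attained at B = A(√(AᵀA))⁻¹. -/
open Matrix

/-- For every real n×n matrix A, the supremum over B ∈ O(n,ℝ) of tr(AᵀB) equals
tr(√(AᵀA)), and this supremum is attained (i.e. tr(√(AᵀA)) is the greatest element of the set of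
values tr(AᵀB)); moreover if A is invertible the supremum is attained at B = A(√(AᵀA))⁻¹.
Here `S` is the unique positive semidefinite square root of AᵀA. -/
theorem sup_trace_over_orthogonal_group {n : ℕ} (A S : Matrix (Fin n) (Fin n) ℝ)
    (hS : S.PosSemidef) (hSS : S * S = Aᵀ * A) :
    IsGreatest {x : ℝ | ∃ B : Matrix (Fin n) (Fin n) ℝ, Bᵀ * B = 1 ∧
        x = Matrix.trace (Aᵀ * B)} (Matrix.trace S) ∧
    (IsUnit A.det →
      (A * S⁻¹)ᵀ * (A * S⁻¹) = 1 ∧ Matrix.trace (Aᵀ * (A * S⁻¹)) = Matrix.trace S) := by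
  classical
  set U : Matrix (Fin n) (Fin n) ℝ := (hS.1.eigenvectorUnitary : Matrix (Fin n) (Fin n) ℝ)
    with hUdef
  set d : Fin n → ℝ := hS.1.eigenvalues with hddef
  have hd0 : ∀ i, 0 ≤ d i := hS.eigenvalues_nonneg
  have hspec : S = U * diagonal d * Uᵀ := by
    have := hS.1.spectral_theorem
    simpa [hUdef, hddef, Matrix.star_eq_conjTranspose,
      Matrix.conjTranspose_eq_transpose_of_trivial, Function.comp] using this
  have hUU : Uᵀ * U = 1 := by
    have := (hS.1.eigenvectorUnitary).2
    rw [Matrix.mem_unitaryGroup_iff'] at this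
    simpa [hUdef, Matrix.star_eq_conjTranspose,
      Matrix.conjTranspose_eq_transpose_of_trivial] using this
  have hUUt : U * Uᵀ = 1 := by
    have := (hS.1.eigenvectorUnitary).2
    rw [Matrix.mem_unitaryGroup_iff] at this
    simpa [hUdef, Matrix.star_eq_conjTranspose,
      Matrix.conjTranspose_eq_transpose_of_trivial] using this
  have hcancel1 : ∀ X : Matrix (Fin n) (Fin n) ℝ, Uᵀ * (U * X) = X := fun X => by
    rw [← Matrix.mul_assoc, hUU, Matrix.one_mul]
  have hcancel2 : ∀ X : Matrix (Fin n) (Fin n) ℝ, U * (Uᵀ * X) = X := fun X => by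
    rw [← Matrix.mul_assoc, hUUt, Matrix.one_mul]
  set M : Matrix (Fin n) (Fin n) ℝ := A * U with hMdef
  have hMM : Mᵀ * M = diagonal (fun i => d i * d i) := by
    have h1 : Mᵀ * M = Uᵀ * ((S * S) * U) := by
      rw [hSS, hMdef, Matrix.transpose_mul, Matrix.mul_assoc, Matrix.mul_assoc]
    rw [h1, hspec]
    simp only [Matrix.mul_assoc, hcancel1, hcancel2, hUU, Matrix.mul_one,
      Matrix.diagonal_mul_diagonal]
  have htrS : Matrix.trace S = ∑ i, d i := by
    rw [hspec, Matrix.trace_mul_cycle, hUU, Matrix.one_mul, Matrix.trace_diagonal]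
  have hMcolsq : ∀ i, ∑ j, M j i * M j i = d i * d i := by
    intro i
    have h : (Mᵀ * M) i i = diagonal (fun i => d i * d i) i i := by rw [hMM]
    simpa [Matrix.mul_apply, Matrix.transpose_apply, Matrix.diagonal_apply_eq] using h
  have hMcol0 : ∀ i, d i = 0 → ∀ j, M j i = 0 := by
    intro i hdi j
    have h1 : ∑ j, M j i * M j i = 0 := by rw [hMcolsq, hdi, mul_zero]
    have h2 : ∀ k ∈ Finset.univ, (0:ℝ) ≤ M k i * M k i := fun k _ => mul_self_nonneg _
    have := (Finset.sum_eq_zero_iff_of_nonneg h2).mp h1 j (Finset.mem_univ j)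
    exact mul_self_eq_zero.mp this
  -- construct the maximizing orthogonal matrix B via orthonormal extension
  set m : Fin n → EuclideanSpace ℝ (Fin n) := fun i => WithLp.toLp 2 (fun k => M k i : Fin n → ℝ) with hmdef
  set v : Fin n → EuclideanSpace ℝ (Fin n) := fun i => (d i)⁻¹ • m i with hvdef
  have hinner : ∀ i j : Fin n,
      (inner ℝ (m i) (m j) : ℝ) = diagonal (fun i => d i * d i) i j := by
    intro i j
    rw [← hMM]
    simp [hmdef, PiLp.inner_apply, Matrix.mul_apply, Matrix.transpose_apply, mul_comm]
  have hon : Orthonormal ℝ (Set.restrict {i | d i ≠ 0} v) := by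
    rw [orthonormal_iff_ite]
    rintro ⟨i, hi⟩ ⟨j, hj⟩
    simp only [Set.restrict_apply, hvdef]
    show inner ℝ ((d i)⁻¹ • m i) ((d j)⁻¹ • m j) = _
    rw [real_inner_smul_left, real_inner_smul_right, hinner]
    by_cases hij : i = j
    · subst hij
      simp only [Subtype.mk.injEq, if_pos rfl, Matrix.diagonal_apply_eq]
      have hi' : d i ≠ 0 := hi
      field_simp
      simp
    · simp only [Subtype.mk.injEq, if_neg hij, Matrix.diagonal_apply_ne _ hij,
        mul_zero, zero_mul]
  obtain ⟨b, hb⟩ := hon.exists_orthonormalBasis_extension_of_card_eq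
    (by simp [finrank_euclideanSpace])
  set B0 : Matrix (Fin n) (Fin n) ℝ := Matrix.of fun j i => b i j with hB0def
  have hB0 : B0ᵀ * B0 = 1 := by
    ext i j
    have hbij : (inner ℝ (b i) (b j) : ℝ) = if i = j then 1 else 0 :=
      orthonormal_iff_ite.mp b.orthonormal i j
    have : (B0ᵀ * B0) i j = ∑ k, b i k * b j k := by
      simp [hB0def, Matrix.mul_apply, Matrix.transpose_apply]
    rw [this]
    have h2 : (inner ℝ (b i) (b j) : ℝ) = ∑ k, b i k * b j k := by
      simp [PiLp.inner_apply, mul_comm]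
    rw [← h2, hbij]
    simp [Matrix.one_apply]
  have hB0D : B0 * diagonal d = M := by
    ext j i
    rw [Matrix.mul_diagonal]
    by_cases hdi : d i = 0
    · rw [hMcol0 i hdi j, hdi, mul_zero]
    · have hbi : b i = v i := hb i hdi
      have : B0 j i = (d i)⁻¹ * M j i := by
        simp only [hB0def, Matrix.of_apply, hbi, hvdef]
        rfl
      rw [this]
      field_simp
  set B : Matrix (Fin n) (Fin n) ℝ := B0 * Uᵀ with hBdef
  have hBo : Bᵀ * B = 1 := by
    rw [hBdef, Matrix.transpose_mul, Matrix.transpose_transpose, Matrix.mul_assoc,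
      ← Matrix.mul_assoc B0ᵀ B0 Uᵀ, hB0, Matrix.one_mul, hUUt]
  have hAeq : A = M * Uᵀ := by
    rw [hMdef, Matrix.mul_assoc, hUUt, Matrix.mul_one]
  have hAB : Aᵀ * B = S := by
    rw [hAeq, ← hB0D, hspec, hBdef]
    simp only [Matrix.transpose_mul, Matrix.transpose_transpose, Matrix.diagonal_transpose,
      Matrix.mul_assoc]
    rw [← Matrix.mul_assoc B0ᵀ B0 Uᵀ, hB0, Matrix.one_mul]
  refine ⟨⟨⟨B, hBo, by rw [hAB]⟩, ?_⟩, ?_⟩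
  · -- upper bound
    rintro x ⟨B', hB', rfl⟩
    set W : Matrix (Fin n) (Fin n) ℝ := B' * U with hWdef
    have hWW : Wᵀ * W = 1 := by
      rw [hWdef, Matrix.transpose_mul, Matrix.mul_assoc, ← Matrix.mul_assoc B'ᵀ B' U,
        hB', Matrix.one_mul, hUU]
    have hWcol : ∀ i, ∑ j, W j i * W j i = 1 := by
      intro i
      have h : (Wᵀ * W) i i = (1 : Matrix (Fin n) (Fin n) ℝ) i i := by rw [hWW]
      simpa [Matrix.mul_apply, Matrix.transpose_apply, Matrix.one_apply] using h
    have h1 : Matrix.trace (Aᵀ * B') = Matrix.trace (Mᵀ * W) := by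
      have h2 : Mᵀ * W = Uᵀ * ((Aᵀ * B') * U) := by
        rw [hMdef, hWdef, Matrix.transpose_mul]
        simp only [Matrix.mul_assoc]
      rw [h2, ← Matrix.mul_assoc, Matrix.trace_mul_cycle, ← Matrix.mul_assoc, hUUt,
        Matrix.one_mul]
    have h3 : Matrix.trace (Mᵀ * W) = ∑ i, ∑ j, M j i * W j i := by
      simp [Matrix.trace, Matrix.diag, Matrix.mul_apply, Matrix.transpose_apply]
    have key : ∀ i, ∑ j, M j i * W j i ≤ d i := by
      intro i
      have hcs := Finset.sum_mul_sq_le_sq_mul_sq Finset.univ (fun j => M j i) (fun j => W j i)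
      have hsq : (∑ j, M j i * W j i) ^ 2 ≤ d i * d i := by
        calc (∑ j, M j i * W j i) ^ 2
            ≤ (∑ j, M j i ^ 2) * (∑ j, W j i ^ 2) := hcs
          _ = d i * d i := by
              simp only [sq]
              rw [hMcolsq, hWcol, mul_one]
      calc ∑ j, M j i * W j i ≤ |∑ j, M j i * W j i| := le_abs_self _
        _ = Real.sqrt ((∑ j, M j i * W j i) ^ 2) := (Real.sqrt_sq_eq_abs _).symm
        _ ≤ Real.sqrt (d i * d i) := Real.sqrt_le_sqrt hsq
        _ = d i := Real.sqrt_mul_self (hd0 i)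
    calc Matrix.trace (Aᵀ * B') = ∑ i, ∑ j, M j i * W j i := by rw [h1, h3]
      _ ≤ ∑ i, d i := Finset.sum_le_sum fun i _ => key i
      _ = Matrix.trace S := htrS.symm
  · -- invertible case
    intro hAdet
    have hSdet : IsUnit S.det := by
      have h : S.det * S.det = A.det * A.det := by
        have := congrArg Matrix.det hSS
        simpa [Matrix.det_mul, Matrix.det_transpose] using this
      have h2 : IsUnit (S.det * S.det) := h ▸ hAdet.mul hAdet
      exact (IsUnit.mul_iff.mp h2).1
    have hSinv : S * S⁻¹ = 1 := Matrix.mul_nonsing_inv S hSdet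
    have hSinv' : S⁻¹ * S = 1 := Matrix.nonsing_inv_mul S hSdet
    have hSt : Sᵀ = S := by
      have := hS.1
      rwa [Matrix.IsHermitian, Matrix.conjTranspose_eq_transpose_of_trivial] at this
    have hSinvT : (S⁻¹)ᵀ = S⁻¹ := by
      rw [Matrix.transpose_nonsing_inv, hSt]
    constructor
    · rw [Matrix.transpose_mul, hSinvT]
      calc S⁻¹ * Aᵀ * (A * S⁻¹) = S⁻¹ * ((Aᵀ * A) * S⁻¹) := by
            simp only [Matrix.mul_assoc]
        _ = S⁻¹ * (S * (S * S⁻¹)) := by rw [← hSS, Matrix.mul_assoc]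
        _ = 1 := by rw [hSinv, Matrix.mul_one, hSinv']
    · rw [← Matrix.mul_assoc, ← hSS, Matrix.mul_assoc, hSinv, Matrix.mul_one]
end

section
/- If A is an invertible real n×n matrix, then the orthogonal matrix Q = A(√(AᵀA))⁻¹ is the unique matrix in O(n,ℝ) minimizing the Frobenius distance ‖A − B‖ over B ∈ O(n,ℝ); in particular Q ∈ O(n,ℝ) and d(A, O(n,ℝ)) = ‖A − Q‖. -/
/-!
For orthogonal `B`, `‖A - B‖² = tr (AᵀA) + n - 2 tr (BᵀA)`, so minimizing the distance means
maximizing `tr (BᵀA) = tr (U S)`, where `A = Q S` and `U = BᵀQ` is orthogonal. Writing the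
positive semidefinite `S` as `CᵀC` gives `2 (tr S - tr (U S)) = ‖C - C U‖² ≥ 0`, with equality
only if `C U = C`, i.e. `S U = S`; as `S` is invertible this forces `U = 1`, i.e. `B = Q`.
-/

open Matrix

/-- The Frobenius norm ‖X‖ = √tr(XᵀX) of a real square matrix. -/
noncomputable def frobNorm {n : ℕ} (X : Matrix (Fin n) (Fin n) ℝ) : ℝ :=
  Real.sqrt (Matrix.trace (Xᵀ * X))

namespace Matrix

variable {m : Type*} [Fintype m]

lemma trace_transpose_mul_self_nonneg (X : Matrix m m ℝ) : 0 ≤ (Xᵀ * X).trace := by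
  simpa using (posSemidef_conjTranspose_mul_self X).trace_nonneg

lemma PosSemidef.exists_eq_transpose_mul_self [DecidableEq m] {S : Matrix m m ℝ}
    (hS : S.PosSemidef) : ∃ C : Matrix m m ℝ, S = Cᵀ * C := by
  open scoped MatrixOrder in
  obtain ⟨C, hC⟩ := CStarAlgebra.nonneg_iff_eq_star_mul_self.mp hS.nonneg
  exact ⟨C, by rwa [star_eq_conjTranspose, conjTranspose_eq_transpose_of_trivial] at hC⟩

lemma transpose_mul_mul_transpose_eq_one {B Q : Matrix m m ℝ} [DecidableEq m]
    (hB : Bᵀ * B = 1) (hQ : Qᵀ * Q = 1) : Bᵀ * Q * (Bᵀ * Q)ᵀ = 1 := by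
  rw [transpose_mul, transpose_transpose, mul_assoc, ← mul_assoc Q, mul_eq_one_comm.mp hQ,
    one_mul, hB]

lemma trace_transpose_mul_sub_of_transpose_mul_self_eq_one [DecidableEq m]
    (A : Matrix m m ℝ) {B : Matrix m m ℝ} (hB : Bᵀ * B = 1) :
    ((A - B)ᵀ * (A - B)).trace = (Aᵀ * A).trace + Fintype.card m - 2 * (Bᵀ * A).trace := by
  have hcross : (Aᵀ * B).trace = (Bᵀ * A).trace := by
    rw [← trace_transpose, transpose_mul, transpose_transpose]
  have hexpand : (A - B)ᵀ * (A - B) = Aᵀ * A - Aᵀ * B - Bᵀ * A + Bᵀ * B := by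
    rw [transpose_sub]
    noncomm_ring
  rw [hexpand, hB, trace_add, trace_sub, trace_sub, trace_one, hcross]
  ring

lemma trace_sub_mul_mul_transpose [DecidableEq m] (C : Matrix m m ℝ) {U : Matrix m m ℝ}
    (hU : U * Uᵀ = 1) :
    ((C - C * U) * (C - C * U)ᵀ).trace = 2 * ((Cᵀ * C).trace - (U * (Cᵀ * C)).trace) := by
  have hexpand : (C - C * U) * (C - C * U)ᵀ
      = C * Cᵀ - C * (U * Cᵀ) - (C * (U * Cᵀ))ᵀ + C * (U * Uᵀ) * Cᵀ := by
    simp only [transpose_sub, transpose_mul, transpose_transpose]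
    noncomm_ring
  rw [hexpand, hU, mul_one, trace_add, trace_sub, trace_sub, trace_transpose,
    trace_mul_comm C, trace_mul_comm C, mul_assoc]
  ring

lemma PosSemidef.trace_mul_le_trace [DecidableEq m] {S U : Matrix m m ℝ}
    (hS : S.PosSemidef) (hU : U * Uᵀ = 1) : (U * S).trace ≤ S.trace := by
  obtain ⟨C, rfl⟩ := hS.exists_eq_transpose_mul_self
  have hgap := trace_sub_mul_mul_transpose C hU
  have hnonneg := trace_transpose_mul_self_nonneg (C - C * U)ᵀ
  rw [transpose_transpose] at hnonneg
  linarith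

lemma PosSemidef.mul_eq_self_of_trace_mul_eq_trace [DecidableEq m] {S U : Matrix m m ℝ}
    (hS : S.PosSemidef) (hU : U * Uᵀ = 1) (h : (U * S).trace = S.trace) : S * U = S := by
  obtain ⟨C, rfl⟩ := hS.exists_eq_transpose_mul_self
  have hzero : ((C - C * U) * (C - C * U)ᵀ).trace = 0 := by
    rw [trace_sub_mul_mul_transpose C hU, h, sub_self, mul_zero]
  rw [← conjTranspose_eq_transpose_of_trivial, trace_mul_conjTranspose_self_eq_zero_iff,
    sub_eq_zero] at hzero
  rw [mul_assoc, ← hzero]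

lemma isUnit_det_of_mul_self_eq_transpose_mul_self [DecidableEq m] {A S : Matrix m m ℝ}
    (hA : IsUnit A.det) (hSS : S * S = Aᵀ * A) : IsUnit S.det := by
  have hdet : S.det * S.det = A.det * A.det := by
    simpa [det_mul, det_transpose] using congrArg det hSS
  exact isUnit_of_mul_isUnit_left (hdet ▸ hA.mul hA)

lemma transpose_mul_inv_mul_mul_inv_eq_one [DecidableEq m] {A S : Matrix m m ℝ}
    (hS : IsUnit S.det) (hSt : Sᵀ = S) (hSS : S * S = Aᵀ * A) :
    (A * S⁻¹)ᵀ * (A * S⁻¹) = 1 := by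
  rw [transpose_mul, transpose_nonsing_inv, hSt]
  calc S⁻¹ * Aᵀ * (A * S⁻¹) = S⁻¹ * (S * S) * S⁻¹ := by simp only [hSS, mul_assoc]
    _ = 1 := by
      rw [← mul_assoc, nonsing_inv_mul _ hS, one_mul, mul_nonsing_inv _ hS]

lemma trace_transpose_mul_sub_eq_add [DecidableEq m] {A Q S B : Matrix m m ℝ}
    (hQ : Qᵀ * Q = 1) (hA : A = Q * S) (hB : Bᵀ * B = 1) :
    ((A - B)ᵀ * (A - B)).trace
      = ((A - Q)ᵀ * (A - Q)).trace + 2 * (S.trace - (Bᵀ * Q * S).trace) := by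
  have hQA : Qᵀ * A = S := by rw [hA, ← mul_assoc, hQ, one_mul]
  rw [trace_transpose_mul_sub_of_transpose_mul_self_eq_one A hB,
    trace_transpose_mul_sub_of_transpose_mul_self_eq_one A hQ, hQA, hA, mul_assoc]
  ring

end Matrix

lemma frobNorm_le_frobNorm_iff {n : ℕ} {X Y : Matrix (Fin n) (Fin n) ℝ} :
    frobNorm X ≤ frobNorm Y ↔ (Xᵀ * X).trace ≤ (Yᵀ * Y).trace :=
  Real.sqrt_le_sqrt_iff (trace_transpose_mul_self_nonneg Y)

lemma frobNorm_eq_frobNorm_iff {n : ℕ} {X Y : Matrix (Fin n) (Fin n) ℝ} :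
    frobNorm X = frobNorm Y ↔ (Xᵀ * X).trace = (Yᵀ * Y).trace :=
  Real.sqrt_inj (trace_transpose_mul_self_nonneg X) (trace_transpose_mul_self_nonneg Y)

/-- If A is an invertible real n×n matrix, then Q = A(√(AᵀA))⁻¹ is the unique
matrix in O(n,ℝ) minimizing the Frobenius distance ‖A − B‖ over B ∈ O(n,ℝ); in particular
Q ∈ O(n,ℝ) and d(A, O(n,ℝ)) = ‖A − Q‖ (expressed via `IsLeast`: ‖A − Q‖ is the least element of
the set of distances from A to orthogonal matrices).  Here `S` is the unique positive
semidefinite square root of AᵀA. -/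
theorem polar_factor_unique_minimizer {n : ℕ} (A S : Matrix (Fin n) (Fin n) ℝ)
    (hA : IsUnit A.det) (hS : S.PosSemidef) (hSS : S * S = Aᵀ * A) :
    (A * S⁻¹)ᵀ * (A * S⁻¹) = 1 ∧
    IsLeast {x : ℝ | ∃ B : Matrix (Fin n) (Fin n) ℝ, Bᵀ * B = 1 ∧ x = frobNorm (A - B)}
      (frobNorm (A - A * S⁻¹)) ∧
    ∀ B : Matrix (Fin n) (Fin n) ℝ, Bᵀ * B = 1 →
      frobNorm (A - B) = frobNorm (A - A * S⁻¹) → B = A * S⁻¹ := by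
  have hSd := isUnit_det_of_mul_self_eq_transpose_mul_self hA hSS
  set Q := A * S⁻¹
  have hQ : Qᵀ * Q = 1 :=
    transpose_mul_inv_mul_mul_inv_eq_one hSd (by simpa using hS.1.eq) hSS
  have hAQS : A = Q * S := by rw [mul_assoc, nonsing_inv_mul _ hSd, mul_one]
  have hgap B (hB : Bᵀ * B = 1) := trace_transpose_mul_sub_eq_add hQ hAQS hB
  have htrace B (hB : Bᵀ * B = 1) :=
    hS.trace_mul_le_trace (transpose_mul_mul_transpose_eq_one hB hQ)
  refine ⟨hQ, ⟨⟨Q, hQ, rfl⟩, ?_⟩, fun B hB hdist => ?_⟩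
  · rintro _ ⟨B, hB, rfl⟩
    rw [frobNorm_le_frobNorm_iff, hgap B hB]
    linarith [htrace B hB]
  · rw [frobNorm_eq_frobNorm_iff, hgap B hB] at hdist
    have hSU : S * (Bᵀ * Q) = S * 1 := by
      rw [mul_one]
      exact hS.mul_eq_self_of_trace_mul_eq_trace (transpose_mul_mul_transpose_eq_one hB hQ)
        (by linarith)
    have hBQ : Bᵀ * Q = 1 := ((isUnit_iff_isUnit_det S).mpr hSd).mul_left_cancel hSU
    exact left_inv_eq_right_inv (mul_eq_one_comm.mp hB) hBQ
end

section
/- Let A be a real n×n matrix of rank k < n. Then the set of matrices in O(n,ℝ) that realize the Frobenius distance from A to O(n,ℝ), namely {B ∈ O(n,ℝ) : ‖A − B‖ = d(A, O(n,ℝ))}, is homeomorphic to the orthogonal group O(n−k,ℝ). Concretely, if A = UDVᵀ is a singular value decomposition with the diagonal entries of D in decreasing order, this set equals U·(I_k ⊕ O(n−k,ℝ))·Vᵀ, i.e. the set of matrices U·blockdiag(I_k, C)·Vᵀ with C ∈ O(n−k,ℝ). -/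
open Matrix

/-- The Frobenius distance from A to the orthogonal group O(n,ℝ). -/
noncomputable def distToOrth {n : ℕ} (A : Matrix (Fin n) (Fin n) ℝ) : ℝ :=
  sInf {x : ℝ | ∃ B : Matrix (Fin n) (Fin n) ℝ, Bᵀ * B = 1 ∧ x = frobNorm (A - B)}

/-- The set of matrices in O(n,ℝ) realizing the Frobenius distance from A to O(n,ℝ). -/
noncomputable def minimizerSet {n : ℕ} (A : Matrix (Fin n) (Fin n) ℝ) :
    Set (Matrix (Fin n) (Fin n) ℝ) :=
  {B | Bᵀ * B = 1 ∧ frobNorm (A - B) = distToOrth A}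

/-!
Write a competitor as `B = U W Vᵀ`. Then `‖A - B‖² = ‖D - W‖² = ∑ (dᵢ - 1)² + 2 ∑ dᵢ (1 - Wᵢᵢ)`,
and every entry of an orthogonal `W` is at most `1`, so `B` is nearest exactly when `Wᵢᵢ = 1`
wherever `dᵢ ≠ 0`, i.e. for the first `k = rank A` indices. An orthogonal matrix with these unit
diagonal entries is `1 ⊕ C` with `C` orthogonal, and `C` is recovered continuously from `B` as the
lower-right block of `Uᵀ B V`.
-/

theorem Fin.mem_iff_lt_of_isLowerSet {n k : ℕ} {s : Finset (Fin n)}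
    (hs : IsLowerSet (s : Set (Fin n))) (hk : s.card = k) (i : Fin n) : i ∈ s ↔ (i : ℕ) < k := by
  constructor
  · intro hi
    have := Finset.card_le_card fun j (hj : j ∈ Finset.Iic i) => hs (Finset.mem_Iic.mp hj) hi
    rw [Fin.card_Iic, hk] at this
    omega
  · intro hik
    by_contra hi
    have hsub : s ⊆ Finset.Iio i := fun j hj =>
      Finset.mem_Iio.mpr (lt_of_not_ge fun hij => hi (hs hij hj))
    have := Finset.card_le_card hsub
    rw [Fin.card_Iio, hk] at this
    omega

theorem Fin.ne_zero_iff_lt_of_antitone {α : Type*} [PartialOrder α] [Zero α] [DecidableEq α]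
    {n k : ℕ} {d : Fin n → α} (hd : Antitone d) (hnn : ∀ i, 0 ≤ d i)
    (hk : Fintype.card {i // d i ≠ 0} = k) (i : Fin n) : d i ≠ 0 ↔ (i : ℕ) < k := by
  have hlower : IsLowerSet (↑(Finset.univ.filter fun i => d i ≠ 0) : Set (Fin n)) := by
    intro a b hba ha
    simp only [Finset.coe_filter, Finset.mem_univ, true_and, Set.mem_ofPred_eq] at ha ⊢
    exact (((hnn a).lt_of_ne' ha).trans_le (hd hba)).ne'
  rw [← Fin.mem_iff_lt_of_isLowerSet hlower (by rw [← hk, Fintype.card_subtype]) i]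
  simp

theorem Fin.range_finSumFinEquiv_trans_finCongr_comp_inl {n k : ℕ} (h : k + (n - k) = n) :
    Set.range (finSumFinEquiv.trans (finCongr h) ∘ Sum.inl) = {i : Fin n | (i : ℕ) < k} := by
  rw [← Fin.range_castLE (show k ≤ n by omega)]
  congr 1

namespace Matrix

variable {ι κ l m : Type*} [Fintype ι] [DecidableEq ι] [Fintype κ] [DecidableEq κ]
  [Fintype l] [DecidableEq l] [Fintype m] [DecidableEq m]

theorem transpose_mem_orthogonalGroup {W : Matrix ι ι ℝ} (hW : W ∈ orthogonalGroup ι ℝ) :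
    Wᵀ ∈ orthogonalGroup ι ℝ :=
  transpose_mem_unitaryGroup_iff.mpr hW

theorem sum_apply_sq_of_mem_orthogonalGroup {W : Matrix ι ι ℝ} (hW : W ∈ orthogonalGroup ι ℝ)
    (j : ι) : ∑ i, W i j ^ 2 = 1 := by
  simpa [mul_apply, sq] using congrFun₂ ((mem_orthogonalGroup_iff' ι ℝ).mp hW) j j

theorem apply_le_one_of_mem_orthogonalGroup {W : Matrix ι ι ℝ} (hW : W ∈ orthogonalGroup ι ℝ)
    (i j : ι) : W i j ≤ 1 := by
  have hsq : W i j ^ 2 ≤ 1 := sum_apply_sq_of_mem_orthogonalGroup hW j ▸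
    Finset.single_le_sum (fun k _ => sq_nonneg (W k j)) (Finset.mem_univ i)
  exact (abs_le.mp ((sq_le_one_iff_abs_le_one _).mp hsq)).2

/-- A unit diagonal entry of an orthogonal matrix exhausts the norm of its column. -/
theorem apply_eq_zero_of_apply_self_eq_one {W : Matrix ι ι ℝ} (hW : W ∈ orthogonalGroup ι ℝ)
    {i j : ι} (hj : W j j = 1) (hij : i ≠ j) : W i j = 0 := by
  have hsum := sum_apply_sq_of_mem_orthogonalGroup hW j
  rw [← Finset.add_sum_erase _ _ (Finset.mem_univ j), hj, one_pow, add_eq_left,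
    Finset.sum_eq_zero_iff_of_nonneg fun k _ => sq_nonneg (W k j)] at hsum
  exact pow_eq_zero_iff two_ne_zero |>.mp <|
    hsum i (Finset.mem_erase.mpr ⟨hij, Finset.mem_univ i⟩)

theorem apply_eq_zero_of_apply_self_eq_one' {W : Matrix ι ι ℝ} (hW : W ∈ orthogonalGroup ι ℝ)
    {i j : ι} (hj : W j j = 1) (hij : i ≠ j) : W j i = 0 :=
  apply_eq_zero_of_apply_self_eq_one (W := Wᵀ) (transpose_mem_orthogonalGroup hW) hj hij

theorem reindex_mem_orthogonalGroup_iff (e : ι ≃ κ) {W : Matrix ι ι ℝ} :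
    reindex e e W ∈ orthogonalGroup κ ℝ ↔ W ∈ orthogonalGroup ι ℝ := by
  have h := (reindex e e).injective.eq_iff (a := Wᵀ * W) (b := 1)
  rw [reindex_apply, reindex_apply, submatrix_one_equiv] at h
  simpa [mem_orthogonalGroup_iff', transpose_reindex, submatrix_mul_equiv] using h

theorem fromBlocks_one_zero_zero_mem_orthogonalGroup_iff {C : Matrix l l ℝ} :
    fromBlocks (1 : Matrix m m ℝ) 0 0 C ∈ orthogonalGroup (m ⊕ l) ℝ ↔
      C ∈ orthogonalGroup l ℝ := by
  simp only [mem_orthogonalGroup_iff', fromBlocks_transpose, fromBlocks_multiply,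
    ← fromBlocks_one, fromBlocks_inj]
  simp

theorem eq_fromBlocks_one_zero_zero_of_mem_orthogonalGroup {W : Matrix (m ⊕ l) (m ⊕ l) ℝ}
    (hW : W ∈ orthogonalGroup (m ⊕ l) ℝ) (h1 : ∀ p, W (.inl p) (.inl p) = 1) :
    W = fromBlocks 1 0 0 W.toBlocks₂₂ := by
  conv_lhs => rw [← fromBlocks_toBlocks W]
  congr 1 <;> ext p q
  · by_cases hpq : p = q
    · subst hpq; simpa [toBlocks₁₁] using h1 p
    · simpa [toBlocks₁₁, one_apply_ne hpq] using
        apply_eq_zero_of_apply_self_eq_one hW (h1 q) (Sum.inl_injective.ne hpq)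
  · exact apply_eq_zero_of_apply_self_eq_one' hW (h1 p) Sum.inr_ne_inl
  · exact apply_eq_zero_of_apply_self_eq_one hW (h1 q) Sum.inr_ne_inl

theorem image_reindex_fromBlocks_one_zero_zero (e : m ⊕ l ≃ ι) :
    (fun C => reindex e e (fromBlocks (1 : Matrix m m ℝ) 0 0 C)) '' orthogonalGroup l ℝ =
      {W | W ∈ orthogonalGroup ι ℝ ∧ ∀ p, W (e (.inl p)) (e (.inl p)) = 1} := by
  ext W
  constructor
  · rintro ⟨C, hC, rfl⟩
    refine ⟨(reindex_mem_orthogonalGroup_iff e).mpr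
      (fromBlocks_one_zero_zero_mem_orthogonalGroup_iff.mpr hC), fun p => ?_⟩
    simp
  · rintro ⟨hW, h1⟩
    set W' := reindex e.symm e.symm W
    have hW' : W' ∈ orthogonalGroup (m ⊕ l) ℝ := (reindex_mem_orthogonalGroup_iff _).mpr hW
    have hblock := eq_fromBlocks_one_zero_zero_of_mem_orthogonalGroup hW' (by simpa [W'] using h1)
    refine ⟨W'.toBlocks₂₂, ?_, ?_⟩
    · rw [hblock] at hW'
      exact fromBlocks_one_zero_zero_mem_orthogonalGroup_iff.mp hW'
    · change reindex e e _ = W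
      rw [← hblock]
      simp [W']

theorem isEmbedding_reindex_fromBlocks_one_zero_zero {ι l m R : Type*} [DecidableEq m]
    [Zero R] [One R] [TopologicalSpace R] (e : m ⊕ l ≃ ι) :
    Topology.IsEmbedding fun C : Matrix l l R =>
      reindex e e (fromBlocks (1 : Matrix m m R) 0 0 C) :=
  Function.LeftInverse.isEmbedding (f := fun W => W.submatrix (e ∘ Sum.inr) (e ∘ Sum.inr))
    (fun C => by ext; simp) (by fun_prop) (by fun_prop)

theorem sum_mul_one_sub_diag_nonneg {d : ι → ℝ} (hd : ∀ i, 0 ≤ d i)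
    {W : Matrix ι ι ℝ} (hW : W ∈ orthogonalGroup ι ℝ) :
    0 ≤ ∑ i, d i * (1 - W i i) :=
  Finset.sum_nonneg fun i _ =>
    mul_nonneg (hd i) (sub_nonneg.mpr (apply_le_one_of_mem_orthogonalGroup hW i i))

theorem sum_mul_one_sub_diag_eq_zero_iff {d : ι → ℝ} (hd : ∀ i, 0 ≤ d i)
    {W : Matrix ι ι ℝ} (hW : W ∈ orthogonalGroup ι ℝ) :
    ∑ i, d i * (1 - W i i) = 0 ↔ ∀ i, d i ≠ 0 → W i i = 1 := by
  rw [Finset.sum_eq_zero_iff_of_nonneg fun i _ =>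
    mul_nonneg (hd i) (sub_nonneg.mpr (apply_le_one_of_mem_orthogonalGroup hW i i))]
  simp only [Finset.mem_univ, true_implies, mul_eq_zero, sub_eq_zero, or_iff_not_imp_left,
    eq_comm (a := (1 : ℝ))]

section Bimultiplication

variable {U V : Matrix ι ι ℝ}

def mulMulTransposeHomeomorph (hU : U ∈ orthogonalGroup ι ℝ) (hV : V ∈ orthogonalGroup ι ℝ) :
    Matrix ι ι ℝ ≃ₜ Matrix ι ι ℝ where
  toFun W := U * W * Vᵀ
  invFun B := Uᵀ * B * V
  left_inv W := by
    simp only [← Matrix.mul_assoc, (mem_orthogonalGroup_iff' ι ℝ).mp hU, Matrix.one_mul]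
    rw [Matrix.mul_assoc, (mem_orthogonalGroup_iff' ι ℝ).mp hV, Matrix.mul_one]
  right_inv B := by
    simp only [← Matrix.mul_assoc, (mem_orthogonalGroup_iff ι ℝ).mp hU, Matrix.one_mul]
    rw [Matrix.mul_assoc, (mem_orthogonalGroup_iff ι ℝ).mp hV, Matrix.mul_one]
  continuous_toFun := by fun_prop
  continuous_invFun := by fun_prop

variable (hU : U ∈ orthogonalGroup ι ℝ) (hV : V ∈ orthogonalGroup ι ℝ)

@[simp]
theorem mulMulTransposeHomeomorph_apply (W : Matrix ι ι ℝ) :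
    mulMulTransposeHomeomorph hU hV W = U * W * Vᵀ :=
  rfl

theorem mulMulTransposeHomeomorph_mem_orthogonalGroup_iff {W : Matrix ι ι ℝ} :
    mulMulTransposeHomeomorph hU hV W ∈ orthogonalGroup ι ℝ ↔ W ∈ orthogonalGroup ι ℝ := by
  refine ⟨fun h => ?_, fun h => mul_mem (mul_mem hU h) (transpose_mem_orthogonalGroup hV)⟩
  rw [← (mulMulTransposeHomeomorph hU hV).symm_apply_apply W]
  exact mul_mem (mul_mem (transpose_mem_orthogonalGroup hU) h) hV

theorem mulMulTransposeHomeomorph_sub (X W : Matrix ι ι ℝ) :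
    mulMulTransposeHomeomorph hU hV (X - W) =
      mulMulTransposeHomeomorph hU hV X - mulMulTransposeHomeomorph hU hV W := by
  simp [Matrix.mul_sub, Matrix.sub_mul]

theorem rank_mulMulTransposeHomeomorph (X : Matrix ι ι ℝ) :
    (mulMulTransposeHomeomorph hU hV X).rank = X.rank := by
  have hVt : IsUnit Vᵀ.det := isUnit_det_of_left_inverse ((mem_orthogonalGroup_iff ι ℝ).mp hV)
  have hU' : IsUnit U.det := isUnit_det_of_left_inverse ((mem_orthogonalGroup_iff' ι ℝ).mp hU)
  rw [mulMulTransposeHomeomorph_apply, rank_mul_eq_left_of_isUnit_det _ _ hVt,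
    rank_mul_eq_right_of_isUnit_det _ _ hU']

end Bimultiplication

end Matrix

section Minimizers

variable {n : ℕ}

theorem frobNorm_mulMulTransposeHomeomorph {U V : Matrix (Fin n) (Fin n) ℝ}
    (hU : U ∈ orthogonalGroup (Fin n) ℝ) (hV : V ∈ orthogonalGroup (Fin n) ℝ)
    (X : Matrix (Fin n) (Fin n) ℝ) : frobNorm (mulMulTransposeHomeomorph hU hV X) = frobNorm X := by
  rw [frobNorm, frobNorm, mulMulTransposeHomeomorph_apply]
  congr 1
  calc trace ((U * X * Vᵀ)ᵀ * (U * X * Vᵀ)) = trace (V * (Xᵀ * (Uᵀ * U) * X) * Vᵀ) := by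
        simp only [transpose_mul, transpose_transpose, Matrix.mul_assoc]
    _ = trace (Vᵀ * V * (Xᵀ * X)) := by
        rw [(mem_orthogonalGroup_iff' _ ℝ).mp hU, Matrix.mul_one, trace_mul_comm, Matrix.mul_assoc]
    _ = trace (Xᵀ * X) := by rw [(mem_orthogonalGroup_iff' _ ℝ).mp hV, Matrix.one_mul]

theorem frobNorm_diagonal_sub (d : Fin n → ℝ) {W : Matrix (Fin n) (Fin n) ℝ}
    (hW : W ∈ orthogonalGroup (Fin n) ℝ) :
    frobNorm (diagonal d - W) = √(∑ i, (d i - 1) ^ 2 + 2 * ∑ i, d i * (1 - W i i)) := by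
  have hexp : (diagonal d - W)ᵀ * (diagonal d - W) =
      (diagonal fun i => d i ^ 2) - diagonal d * W - (diagonal d * W)ᵀ + 1 := by
    rw [transpose_sub, diagonal_transpose, Matrix.sub_mul, Matrix.mul_sub, Matrix.mul_sub,
      (mem_orthogonalGroup_iff' _ ℝ).mp hW, transpose_mul, diagonal_transpose,
      diagonal_mul_diagonal]
    simp only [← sq]
    abel
  rw [frobNorm, hexp, trace_add, trace_sub, trace_sub, trace_transpose]
  congr 1
  simp only [trace, diag_apply, diagonal_mul, diagonal_apply_eq, one_apply_eq, Finset.mul_sum,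
    ← Finset.sum_sub_distrib, ← Finset.sum_add_distrib]
  exact Finset.sum_congr rfl fun i _ => by ring

theorem mem_minimizerSet_iff {A B : Matrix (Fin n) (Fin n) ℝ} :
    B ∈ minimizerSet A ↔ B ∈ orthogonalGroup (Fin n) ℝ ∧
      ∀ B' ∈ orthogonalGroup (Fin n) ℝ, frobNorm (A - B) ≤ frobNorm (A - B') := by
  simp only [minimizerSet, distToOrth, Set.mem_ofPred_eq, ← mem_orthogonalGroup_iff']
  refine and_congr_right fun hB => ⟨fun h B' hB' => ?_, fun h => ?_⟩
  · rw [h]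
    refine csInf_le ⟨0, ?_⟩ ⟨B', hB', rfl⟩
    rintro _ ⟨B'', -, rfl⟩
    exact Real.sqrt_nonneg _
  · refine Eq.symm (IsLeast.csInf_eq ⟨⟨B, hB, rfl⟩, ?_⟩)
    rintro _ ⟨B', hB', rfl⟩
    exact h B' hB'

theorem minimizerSet_mulMulTransposeHomeomorph {U V : Matrix (Fin n) (Fin n) ℝ}
    (hU : U ∈ orthogonalGroup (Fin n) ℝ) (hV : V ∈ orthogonalGroup (Fin n) ℝ)
    (X : Matrix (Fin n) (Fin n) ℝ) :
    minimizerSet (mulMulTransposeHomeomorph hU hV X) =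
      mulMulTransposeHomeomorph hU hV '' minimizerSet X := by
  set f := mulMulTransposeHomeomorph hU hV
  ext B
  obtain ⟨W, rfl⟩ := f.surjective B
  have hdist : ∀ Y, frobNorm (f X - f Y) = frobNorm (X - Y) := fun Y => by
    rw [← mulMulTransposeHomeomorph_sub, frobNorm_mulMulTransposeHomeomorph]
  rw [f.injective.mem_set_image, mem_minimizerSet_iff, mem_minimizerSet_iff,
    mulMulTransposeHomeomorph_mem_orthogonalGroup_iff]
  refine and_congr_right fun _ => ⟨fun h W' hW' => ?_, fun h B' hB' => ?_⟩
  · simpa only [hdist] using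
      h (f W') ((mulMulTransposeHomeomorph_mem_orthogonalGroup_iff hU hV).mpr hW')
  · obtain ⟨W', rfl⟩ := f.surjective B'
    simpa only [hdist] using
      h W' ((mulMulTransposeHomeomorph_mem_orthogonalGroup_iff hU hV).mp hB')

/-- `‖diagonal d - W‖` increases with `∑ i, d i * (1 - W i i) ≥ 0`, which vanishes at `W = 1`. -/
theorem minimizerSet_diagonal {d : Fin n → ℝ} (hd : ∀ i, 0 ≤ d i) :
    minimizerSet (diagonal d) =
      {W | W ∈ orthogonalGroup (Fin n) ℝ ∧ ∀ i, d i ≠ 0 → W i i = 1} := by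
  ext W
  rw [mem_minimizerSet_iff, Set.mem_ofPred_eq]
  refine and_congr_right fun hW => ?_
  rw [← sum_mul_one_sub_diag_eq_zero_iff hd hW]
  have hmono : ∀ W' ∈ orthogonalGroup (Fin n) ℝ,
      frobNorm (diagonal d - W) ≤ frobNorm (diagonal d - W') ↔
        ∑ i, d i * (1 - W i i) ≤ ∑ i, d i * (1 - W' i i) := fun W' hW' => by
    have hnonneg := sum_mul_one_sub_diag_nonneg hd hW'
    rw [frobNorm_diagonal_sub d hW, frobNorm_diagonal_sub d hW',
      Real.sqrt_le_sqrt_iff (by positivity)]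
    constructor <;> intro h <;> linarith
  constructor
  · intro h
    have := (hmono 1 (one_mem _)).mp (h 1 (one_mem _))
    simp only [one_apply_eq, sub_self, mul_zero, Finset.sum_const_zero] at this
    exact le_antisymm this (sum_mul_one_sub_diag_nonneg hd hW)
  · intro h W' hW'
    exact (hmono W' hW').mpr (h ▸ sum_mul_one_sub_diag_nonneg hd hW')

theorem minimizerSet_mulMulTransposeHomeomorph_diagonal {l m : Type*} [Fintype m]
    [DecidableEq m] [Fintype l] [DecidableEq l] {U V : Matrix (Fin n) (Fin n) ℝ}
    (hU : U ∈ orthogonalGroup (Fin n) ℝ) (hV : V ∈ orthogonalGroup (Fin n) ℝ)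
    {d : Fin n → ℝ} (hd : ∀ i, 0 ≤ d i) (e : m ⊕ l ≃ Fin n)
    (hsupp : ∀ i, d i ≠ 0 ↔ i ∈ Set.range (e ∘ Sum.inl)) :
    minimizerSet (mulMulTransposeHomeomorph hU hV (diagonal d)) =
      (mulMulTransposeHomeomorph hU hV ∘ fun C => reindex e e (fromBlocks (1 : Matrix m m ℝ) 0 0 C))
        '' {C | Cᵀ * C = 1} := by
  have hO : {C : Matrix l l ℝ | Cᵀ * C = 1} = orthogonalGroup l ℝ :=
    Set.ext fun _ => (mem_orthogonalGroup_iff' _ ℝ).symm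
  rw [minimizerSet_mulMulTransposeHomeomorph, minimizerSet_diagonal hd, Set.image_comp, hO,
    image_reindex_fromBlocks_one_zero_zero]
  simp_rw [hsupp, Set.forall_mem_range]
  rfl

end Minimizers

/-- Let A be a real n×n matrix of rank k < n.  Then the set of matrices in O(n,ℝ)
realizing the Frobenius distance from A to O(n,ℝ) is homeomorphic to O(n−k,ℝ).  Concretely, if
A = UDVᵀ is a singular value decomposition with the diagonal entries of D nonnegative and in
decreasing order, this set equals {U · blockdiag(I_k, C) · Vᵀ : C ∈ O(n−k,ℝ)}. -/
theorem minimizer_set_of_singular_matrix {n k : ℕ} (hkn : k < n)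
    (A : Matrix (Fin n) (Fin n) ℝ) (hrank : A.rank = k)
    (U V D : Matrix (Fin n) (Fin n) ℝ) (hU : Uᵀ * U = 1) (hV : Vᵀ * V = 1)
    (hDdiag : ∀ i j : Fin n, i ≠ j → D i j = 0) (hDnn : ∀ i : Fin n, 0 ≤ D i i)
    (hDdec : ∀ i j : Fin n, i ≤ j → D j j ≤ D i i)
    (hSVD : A = U * D * Vᵀ) :
    minimizerSet A =
      {B | ∃ C : Matrix (Fin (n - k)) (Fin (n - k)) ℝ, Cᵀ * C = 1 ∧
        B = U * (Matrix.reindex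
              (finSumFinEquiv.trans (finCongr (Nat.add_sub_cancel' hkn.le)))
              (finSumFinEquiv.trans (finCongr (Nat.add_sub_cancel' hkn.le)))
              (Matrix.fromBlocks (1 : Matrix (Fin k) (Fin k) ℝ) 0 0 C)) * Vᵀ} ∧
    Nonempty ((minimizerSet A) ≃ₜ
      {C : Matrix (Fin (n - k)) (Fin (n - k)) ℝ // Cᵀ * C = 1}) := by
  set e := finSumFinEquiv.trans (finCongr (Nat.add_sub_cancel' hkn.le))
  have hU' := (mem_orthogonalGroup_iff' _ ℝ).mpr hU
  have hV' := (mem_orthogonalGroup_iff' _ ℝ).mpr hV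
  set f := mulMulTransposeHomeomorph hU' hV'
  have hA : A = f (diagonal D.diag) := by
    rw [hSVD, (show D.IsDiag from hDdiag).diagonal_diag]
    rfl
  have hcard : Fintype.card {i // D.diag i ≠ 0} = k := by
    rw [← hrank, hA, rank_mulMulTransposeHomeomorph, rank_diagonal]
  have hsupp : ∀ i, D.diag i ≠ 0 ↔ i ∈ Set.range (e ∘ Sum.inl) := fun i => by
    rw [Fin.ne_zero_iff_lt_of_antitone (d := D.diag) hDdec hDnn hcard,
      Fin.range_finSumFinEquiv_trans_finCongr_comp_inl]
    rfl
  have hset := hA ▸ minimizerSet_mulMulTransposeHomeomorph_diagonal hU' hV' hDnn e hsupp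
  refine ⟨hset.trans ?_, ⟨(Homeomorph.setCongr hset).trans
    ((f.isEmbedding.comp (isEmbedding_reindex_fromBlocks_one_zero_zero e)).homeomorphImage _).symm⟩⟩
  ext B
  simp [eq_comm]
end

section
/- The function g : M(n,ℝ) → ℝ defined by g(A) = tr(√(AᵀA)) is (Fréchet) differentiable at A if and only if A is invertible. -/
open Matrix

attribute [local instance] Matrix.normedAddCommGroup Matrix.normedSpace

open scoped Classical in
/-- The unique positive semidefinite square root of a positive semidefinite real matrix
(junk value `0` on matrices that are not positive semidefinite). -/
noncomputable def psdSqrt {n : ℕ} (X : Matrix (Fin n) (Fin n) ℝ) : Matrix (Fin n) (Fin n) ℝ :=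
  if h : X.PosSemidef then
    h.1.eigenvectorUnitary.1 * diagonal ((↑) ∘ (√·) ∘ h.1.eigenvalues) *
      (star h.1.eigenvectorUnitary : Matrix (Fin n) (Fin n) ℝ)
  else 0

open Topology

/-!
At an invertible `A`, `S = √(AᵀA)` is positive definite, so the derivative `K ↦ SK + KS` of
`X ↦ X²` at `S` is injective (a trace argument) and the inverse function theorem gives a
differentiable local inverse of squaring near `S`. By continuity of the square root, `√(XᵀX)`
is that local inverse evaluated at `XᵀX` for `X` near `A`.

At a singular `A`, pick unit vectors `v ∈ ker A` and `w ∈ ker Aᵀ`. Along the line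
`A + t w vᵀ` the matrix `XᵀX` is `AᵀA + t² v vᵀ`, whose square root is `√(AᵀA) + |t| v vᵀ`
because `√(AᵀA) v = 0`; so on this line `tr √(XᵀX) = tr √(AᵀA) + |t|`.
-/

lemma posSemidef_transpose_mul_self {m : Type*} [Fintype m] (X : Matrix m m ℝ) :
    (Xᵀ * X).PosSemidef := by
  simpa using posSemidef_conjTranspose_mul_self X

section SquareRoot

open scoped MatrixOrder

variable {n : ℕ}

lemma psdSqrt_eq_cfcSqrt {X : Matrix (Fin n) (Fin n) ℝ} (hX : X.PosSemidef) :
    psdSqrt X = CFC.sqrt X := by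
  rw [psdSqrt, dif_pos hX, CFC.sqrt_eq_cfc, cfc_nnreal_eq_real _ X, hX.1.cfc_eq]
  simp only [IsHermitian.cfc, Unitary.conjStarAlgAut_apply]
  congr 3
  ext i
  simp [Real.coe_sqrt, Real.coe_toNNReal', max_eq_left (hX.eigenvalues_nonneg i)]

lemma posSemidef_psdSqrt {X : Matrix (Fin n) (Fin n) ℝ} (hX : X.PosSemidef) :
    (psdSqrt X).PosSemidef := by
  rw [psdSqrt_eq_cfcSqrt hX]
  exact (CFC.sqrt_nonneg X).posSemidef

lemma psdSqrt_mul_psdSqrt {X : Matrix (Fin n) (Fin n) ℝ} (hX : X.PosSemidef) :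
    psdSqrt X * psdSqrt X = X := by
  rw [psdSqrt_eq_cfcSqrt hX]
  exact CFC.sqrt_mul_sqrt_self X hX.nonneg

lemma psdSqrt_mul_self {S : Matrix (Fin n) (Fin n) ℝ} (hS : S.PosSemidef) :
    psdSqrt (S * S) = S := by
  have hSS : (S * S).PosSemidef := by
    simpa only [hS.isHermitian.eq] using posSemidef_conjTranspose_mul_self S
  rw [psdSqrt_eq_cfcSqrt hSS, CFC.sqrt_eq_iff _ _ hSS.nonneg hS.nonneg]

lemma continuous_psdSqrt_transpose_mul_self :
    Continuous fun X : Matrix (Fin n) (Fin n) ℝ => psdSqrt (Xᵀ * X) := by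
  -- Continuity of the C⋆-algebra square root for the L2 operator norm, whose topology is the
  -- usual one.
  have hcfc : ContinuousOn (CFC.sqrt : Matrix (Fin n) (Fin n) ℝ → _) {X | 0 ≤ X} := by
    open scoped Matrix.Norms.L2Operator in
    exact CFC.continuousOn_sqrt
  refine (hcfc.comp_continuous (continuous_id.matrix_transpose.matrix_mul continuous_id)
    fun X => (posSemidef_transpose_mul_self X).nonneg).congr fun X => ?_
  exact (psdSqrt_eq_cfcSqrt (posSemidef_transpose_mul_self X)).symm

end SquareRoot

open scoped ComplexOrder in
lemma Matrix.PosDef.eq_zero_of_mul_add_mul_eq_zero {m 𝕜 : Type*} [Fintype m] [RCLike 𝕜]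
    {S K : Matrix m m 𝕜} (hS : S.PosDef) (h : S * K + K * S = 0) : K = 0 := by
  have hleft : (Kᴴ * S * K).PosSemidef := hS.posSemidef.conjTranspose_mul_mul_same K
  have hright : (K * S * Kᴴ).PosSemidef := hS.posSemidef.mul_mul_conjTranspose_same K
  have htrace : (Kᴴ * S * K).trace + (K * S * Kᴴ).trace = 0 := by
    rw [trace_mul_cycle K S Kᴴ, Matrix.mul_assoc, Matrix.mul_assoc, ← trace_add,
      ← Matrix.mul_add, h, Matrix.mul_zero, trace_zero]
  have hzero : Kᴴ * S * K = 0 :=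
    hleft.trace_eq_zero_iff.mp ((add_eq_zero_iff_of_nonneg hleft.trace_nonneg
      hright.trace_nonneg).mp htrace).1
  refine ext_iff_mulVec.mpr fun x => ?_
  by_contra hx
  have hpos := hS.dotProduct_mulVec_pos (x := K *ᵥ x) (by simpa using hx)
  rw [star_mulVec, ← dotProduct_mulVec, mulVec_mulVec, mulVec_mulVec, hzero, zero_mulVec,
    dotProduct_zero] at hpos
  exact hpos.false

lemma differentiable_trace {m : Type*} [Fintype m] :
    Differentiable ℝ fun X : Matrix m m ℝ => X.trace :=
  (LinearMap.toContinuousLinearMap (traceLinearMap m ℝ ℝ)).differentiable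

section Calculus

variable {m : Type*} [Fintype m] [DecidableEq m]

lemma hasStrictFDerivAt_mul_self (S : Matrix m m ℝ) :
    HasStrictFDerivAt (fun X : Matrix m m ℝ => X * X)
      (LinearMap.toContinuousLinearMap (LinearMap.mulLeft ℝ S + LinearMap.mulRight ℝ S)) S := by
  exact ((LinearMap.mul ℝ (Matrix m m ℝ)).toContinuousBilinearMap.hasStrictFDerivAt_of_bilinear
    (hasStrictFDerivAt_id S) (hasStrictFDerivAt_id S)).congr_fderiv rfl

lemma differentiable_transpose_mul_self : Differentiable ℝ fun X : Matrix m m ℝ => Xᵀ * X := by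
  let T := LinearMap.toContinuousLinearMap (transposeLinearEquiv m m ℝ ℝ).toLinearMap
  exact fun X => ((LinearMap.mul ℝ (Matrix m m ℝ)).toContinuousBilinearMap.hasFDerivAt_of_bilinear
    T.hasFDerivAt (hasFDerivAt_id X)).differentiableAt

lemma Matrix.PosDef.exists_local_left_inverse_mul_self {S : Matrix m m ℝ} (hS : S.PosDef) :
    ∃ φ : Matrix m m ℝ → Matrix m m ℝ,
      DifferentiableAt ℝ φ (S * S) ∧ ∀ᶠ X in 𝓝 S, φ (X * X) = X := by
  have hinj : Function.Injective (LinearMap.mulLeft ℝ S + LinearMap.mulRight ℝ S) :=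
    (injective_iff_map_eq_zero _).mpr fun K hK => hS.eq_zero_of_mul_add_mul_eq_zero hK
  let e := (LinearEquiv.ofInjectiveEndo _ hinj).toContinuousLinearEquiv
  have hf : HasStrictFDerivAt (fun X : Matrix m m ℝ => X * X) (e : _ →L[ℝ] _) S :=
    hasStrictFDerivAt_mul_self S
  exact ⟨hf.localInverse _ _ _, hf.to_localInverse.differentiableAt, hf.eventually_left_inverse⟩

end Calculus

lemma not_differentiableAt_of_forall_eq_add_abs {E : Type*} [NormedAddCommGroup E]
    [NormedSpace ℝ E] {f : E → ℝ} {a v : E} (h : ∀ t : ℝ, f (a + t • v) = f a + |t|) :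
    ¬ DifferentiableAt ℝ f a := by
  intro hf
  have hline : DifferentiableAt ℝ (fun t : ℝ => f (a + t • v)) 0 :=
    DifferentiableAt.comp (0 : ℝ) (by simpa using hf) (by fun_prop)
  exact not_differentiableAt_abs_zero (by simpa [h] using hline.sub_const (f a))

lemma exists_mulVec_eq_zero_dotProduct_self_eq_one {m : Type*} [Fintype m] [DecidableEq m]
    {A : Matrix m m ℝ} (h : A.det = 0) : ∃ v, A *ᵥ v = 0 ∧ v ⬝ᵥ v = 1 := by
  obtain ⟨v, hv, hAv⟩ := exists_mulVec_eq_zero_iff.mpr h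
  have hpos : 0 < v ⬝ᵥ v := by simpa using dotProduct_star_self_pos_iff.mpr hv
  refine ⟨(√(v ⬝ᵥ v))⁻¹ • v, by rw [mulVec_smul, hAv, smul_zero], ?_⟩
  rw [smul_dotProduct, dotProduct_smul, smul_eq_mul, smul_eq_mul, ← mul_assoc, ← mul_inv,
    Real.mul_self_sqrt hpos.le, inv_mul_cancel₀ hpos.ne']

section TraceSqrt

variable {n : ℕ}

lemma psdSqrt_transpose_mul_self_add_smul_vecMulVec {A : Matrix (Fin n) (Fin n) ℝ}
    {v w : Fin n → ℝ} (hv : A *ᵥ v = 0) (hw : Aᵀ *ᵥ w = 0) (hv1 : v ⬝ᵥ v = 1)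
    (hw1 : w ⬝ᵥ w = 1) (t : ℝ) :
    psdSqrt ((A + t • vecMulVec w v)ᵀ * (A + t • vecMulVec w v)) =
      psdSqrt (Aᵀ * A) + |t| • vecMulVec v v := by
  set S := psdSqrt (Aᵀ * A)
  set P := vecMulVec v v
  have hS : S.PosSemidef := posSemidef_psdSqrt (posSemidef_transpose_mul_self A)
  have hSS : S * S = Aᵀ * A := psdSqrt_mul_psdSqrt (posSemidef_transpose_mul_self A)
  have hSv : S *ᵥ v = 0 := by
    rw [← conjTranspose_mul_self_mulVec_eq_zero, hS.isHermitian.eq, hSS, ← mulVec_mulVec, hv,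
      mulVec_zero]
  have hSP : S * P = 0 := by rw [mul_vecMulVec, hSv, zero_vecMulVec]
  have hPS : P * S = 0 := by
    rw [vecMulVec_mul, ← mulVec_transpose, ← conjTranspose_eq_transpose_of_trivial,
      hS.isHermitian.eq, hSv, vecMulVec_zero]
  have hPP : P * P = P := by rw [vecMulVec_mul_vecMulVec, hv1, one_smul]
  have hAB : Aᵀ * vecMulVec w v = 0 := by rw [mul_vecMulVec, hw, zero_vecMulVec]
  have hBA : (vecMulVec w v)ᵀ * A = 0 := by
    rw [transpose_vecMulVec, vecMulVec_mul, ← mulVec_transpose, hw, vecMulVec_zero]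
  have hBB : (vecMulVec w v)ᵀ * vecMulVec w v = P := by
    rw [transpose_vecMulVec, vecMulVec_mul_vecMulVec, hw1, one_smul]
  have hP : P.PosSemidef := by simpa using posSemidef_vecMulVec_self_star v
  have hsq : (A + t • vecMulVec w v)ᵀ * (A + t • vecMulVec w v) =
      (S + |t| • P) * (S + |t| • P) := by
    simp only [transpose_add, transpose_smul, Matrix.add_mul, Matrix.mul_add, Matrix.smul_mul,
      Matrix.mul_smul, hAB, hBA, hBB, hSP, hPS, hPP, hSS, smul_zero, add_zero, zero_add, smul_smul,
      abs_mul_abs_self]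
  rw [hsq, psdSqrt_mul_self (hS.add (hP.smul (abs_nonneg t)))]

lemma trace_psdSqrt_transpose_mul_self_add_smul_vecMulVec {A : Matrix (Fin n) (Fin n) ℝ}
    {v w : Fin n → ℝ} (hv : A *ᵥ v = 0) (hw : Aᵀ *ᵥ w = 0) (hv1 : v ⬝ᵥ v = 1)
    (hw1 : w ⬝ᵥ w = 1) (t : ℝ) :
    (psdSqrt ((A + t • vecMulVec w v)ᵀ * (A + t • vecMulVec w v))).trace =
      (psdSqrt (Aᵀ * A)).trace + |t| := by
  rw [psdSqrt_transpose_mul_self_add_smul_vecMulVec hv hw hv1 hw1, trace_add, trace_smul,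
    trace_vecMulVec, hv1, smul_eq_mul, mul_one]

lemma differentiableAt_trace_psdSqrt_transpose_mul_self {A : Matrix (Fin n) (Fin n) ℝ}
    (hA : IsUnit A.det) :
    DifferentiableAt ℝ (fun X : Matrix (Fin n) (Fin n) ℝ => (psdSqrt (Xᵀ * X)).trace) A := by
  set S := psdSqrt (Aᵀ * A)
  have hSS : S * S = Aᵀ * A := psdSqrt_mul_psdSqrt (posSemidef_transpose_mul_self A)
  have hS : S.PosDef := by
    refine (posSemidef_psdSqrt (posSemidef_transpose_mul_self A)).posDef_iff_det_ne_zero.mpr ?_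
    have hdet := congrArg det hSS
    rw [det_mul, det_mul, det_transpose] at hdet
    exact fun h => hA.ne_zero (mul_self_eq_zero.mp (by rw [← hdet, h, zero_mul]))
  obtain ⟨φ, hφ, hleft⟩ := hS.exists_local_left_inverse_mul_self
  have hφA : DifferentiableAt ℝ φ (Aᵀ * A) := hSS ▸ hφ
  have heq : (fun X => psdSqrt (Xᵀ * X)) =ᶠ[𝓝 A] fun X => φ (Xᵀ * X) := by
    filter_upwards [continuous_psdSqrt_transpose_mul_self.continuousAt.eventually hleft] with X hX
    rwa [psdSqrt_mul_psdSqrt (posSemidef_transpose_mul_self X), eq_comm] at hX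
  exact (differentiable_trace _).comp A
    (hφA.comp (f := fun X => Xᵀ * X) A (differentiable_transpose_mul_self A))
    |>.congr_of_eventuallyEq (heq.fun_comp trace)

end TraceSqrt

/-- The function g : M(n,ℝ) → ℝ, g(A) = tr(√(AᵀA)), is (Fréchet) differentiable
at A if and only if A is invertible. -/
theorem trace_sqrt_differentiable_iff_invertible {n : ℕ} (A : Matrix (Fin n) (Fin n) ℝ) :
    DifferentiableAt ℝ
      (fun X : Matrix (Fin n) (Fin n) ℝ => Matrix.trace (psdSqrt (Xᵀ * X))) A ↔
    IsUnit A.det := by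
  refine ⟨fun hdiff => ?_, differentiableAt_trace_psdSqrt_transpose_mul_self⟩
  by_contra hA
  obtain ⟨v, hv, hv1⟩ := exists_mulVec_eq_zero_dotProduct_self_eq_one (A := A)
    (by simpa using hA)
  obtain ⟨w, hw, hw1⟩ := exists_mulVec_eq_zero_dotProduct_self_eq_one (A := Aᵀ)
    (by simpa using hA)
  exact not_differentiableAt_of_forall_eq_add_abs
    (trace_psdSqrt_transpose_mul_self_add_smul_vecMulVec hv hw hv1 hw1) hdiff
end

section
/- If 𝒜 ∈ U(p,q), then 𝒜* ∈ U(p,q) (equivalently 𝒜 I_{p,q} 𝒜* = I_{p,q}), 𝒜*𝒜 ∈ U(p,q), and the unique positive definite square root √(𝒜*𝒜) of 𝒜*𝒜 also lies in U(p,q), i.e. √(𝒜*𝒜)* I_{p,q} √(𝒜*𝒜) = I_{p,q}. -/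
/-!
A matrix `A` with `Aᴴ J A = J` for an involution `J` has left inverse `J Aᴴ J`, which is then also
a right inverse; this gives `A J Aᴴ = J`. For a positive definite `S` with `S²` in `U(J)`, both
`S⁻¹` and `J S J` are positive semidefinite square roots of `(S²)⁻¹ = J S² J`, so uniqueness of
positive square roots forces `S⁻¹ = J S J`, i.e. `S ∈ U(J)`.
-/

open Matrix
open scoped ComplexOrder

/-- The matrix I_{p,q} = diag(I_p, −I_q) defining the indefinite Hermitian form of
signature (p,q). -/
def Ipq (p q : ℕ) : Matrix (Fin p ⊕ Fin q) (Fin p ⊕ Fin q) ℂ :=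
  Matrix.fromBlocks 1 0 0 (-1)

namespace Matrix

variable {n R : Type*} [Fintype n] [DecidableEq n]

/-- `U(p,q)` is `indefiniteUnitary (Ipq p q)`. -/
def indefiniteUnitary [Semiring R] [StarRing R] (J : Matrix n n R) : Submonoid (Matrix n n R) where
  carrier := {A | Aᴴ * J * A = J}
  one_mem' := by simp
  mul_mem' {A B} (hA : Aᴴ * J * A = J) (hB : Bᴴ * J * B = J) := by
    change (A * B)ᴴ * J * (A * B) = J
    calc (A * B)ᴴ * J * (A * B) = Bᴴ * (Aᴴ * J * A) * B := by
          simp only [conjTranspose_mul, mul_assoc]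
      _ = J := by rw [hA, hB]

namespace indefiniteUnitary

section Semiring

variable [Semiring R] [StarRing R] {J A : Matrix n n R}

theorem mem_iff : A ∈ indefiniteUnitary J ↔ Aᴴ * J * A = J := Iff.rfl

theorem mul_conjTranspose_mul_mul_eq_one (hJ : J * J = 1) (hA : A ∈ indefiniteUnitary J) :
    J * Aᴴ * J * A = 1 := by
  calc J * Aᴴ * J * A = J * (Aᴴ * J * A) := by simp only [mul_assoc]
    _ = 1 := by rw [mem_iff.mp hA, hJ]

end Semiring

section CommRing

variable [CommRing R] [StarRing R] {J A : Matrix n n R}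

theorem inv_eq (hJ : J * J = 1) (hA : A ∈ indefiniteUnitary J) : A⁻¹ = J * Aᴴ * J :=
  inv_eq_left_inv (mul_conjTranspose_mul_mul_eq_one hJ hA)

theorem mem_of_inv_eq (hJ : J * J = 1) (hA : IsUnit A) (h : A⁻¹ = J * Aᴴ * J) :
    A ∈ indefiniteUnitary J := by
  have hleft : J * (Aᴴ * J * A) = 1 := by
    rw [← nonsing_inv_mul A ((isUnit_iff_isUnit_det A).mp hA), h]
    simp only [mul_assoc]
  calc Aᴴ * J * A = J * J * (Aᴴ * J * A) := by rw [hJ, one_mul]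
    _ = J := by rw [mul_assoc, hleft, mul_one]

theorem conjTranspose_mem (hJ : J * J = 1) (hA : A ∈ indefiniteUnitary J) :
    Aᴴ ∈ indefiniteUnitary J := by
  have hright : A * (J * Aᴴ * J) = 1 :=
    mul_eq_one_comm.mp (mul_conjTranspose_mul_mul_eq_one hJ hA)
  rw [mem_iff, conjTranspose_conjTranspose]
  calc A * J * Aᴴ = A * (J * Aᴴ * J) * J := by simp only [mul_assoc, hJ, mul_one]
    _ = J := by rw [hright, one_mul]

end CommRing

open scoped MatrixOrder in
theorem mem_of_posDef_of_mul_self_mem {𝕜 : Type*} [RCLike 𝕜] {J S : Matrix n n 𝕜}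
    (hJ : J * J = 1) (hJH : J.IsHermitian) (hS : S.PosDef)
    (hSS : S * S ∈ indefiniteUnitary J) : S ∈ indefiniteUnitary J := by
  have hSH : Sᴴ = S := hS.isHermitian.eq
  have hsq : (S⁻¹) ^ 2 = (J * S * J) ^ 2 := by
    rw [sq, ← mul_inv_rev, inv_eq hJ hSS, conjTranspose_mul, hSH]
    calc J * (S * S) * J = J * S * (J * J) * S * J := by simp only [hJ, mul_one, mul_assoc]
      _ = (J * S * J) ^ 2 := by rw [sq]; simp only [mul_assoc]
  have hJSJ : (J * S * J).PosSemidef := by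
    simpa only [hJH.eq] using hS.posSemidef.conjTranspose_mul_mul_same J
  refine mem_of_inv_eq hJ hS.isUnit ?_
  rw [hSH]
  exact (CFC.sq_eq_sq_iff _ _ hS.inv.posSemidef.nonneg hJSJ.nonneg).mp hsq

end indefiniteUnitary

end Matrix

theorem Ipq_isHermitian (p q : ℕ) : (Ipq p q).IsHermitian := by
  simp [Ipq, IsHermitian, fromBlocks_conjTranspose]

theorem Ipq_mul_self (p q : ℕ) : Ipq p q * Ipq p q = 1 := by
  simp [Ipq, fromBlocks_multiply, ← fromBlocks_one]

open Matrix.indefiniteUnitary in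
theorem indefinite_unitary_closed_under_star_and_sqrt_general {p q : ℕ}
    (𝒜 : Matrix (Fin p ⊕ Fin q) (Fin p ⊕ Fin q) ℂ)
    (h𝒜 : 𝒜ᴴ * Ipq p q * 𝒜 = Ipq p q) :
    (𝒜ᴴ)ᴴ * Ipq p q * 𝒜ᴴ = Ipq p q ∧
    𝒜 * Ipq p q * 𝒜ᴴ = Ipq p q ∧
    (𝒜ᴴ * 𝒜)ᴴ * Ipq p q * (𝒜ᴴ * 𝒜) = Ipq p q ∧
    ∀ S : Matrix (Fin p ⊕ Fin q) (Fin p ⊕ Fin q) ℂ, S.PosDef → S * S = 𝒜ᴴ * 𝒜 →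
      Sᴴ * Ipq p q * S = Ipq p q := by
  have hA : 𝒜 ∈ indefiniteUnitary (Ipq p q) := h𝒜
  have hAH := conjTranspose_mem (Ipq_mul_self p q) hA
  have hAHA := mul_mem hAH hA
  refine ⟨hAH, by simpa only [conjTranspose_conjTranspose] using mem_iff.mp hAH, hAHA, ?_⟩
  intro S hS hSS
  exact mem_of_posDef_of_mul_self_mem (Ipq_mul_self p q) (Ipq_isHermitian p q) hS (hSS ▸ hAHA)

/-- If 𝒜 ∈ U(p,q), then 𝒜* ∈ U(p,q) (equivalently 𝒜 I_{p,q} 𝒜* = I_{p,q}),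
𝒜*𝒜 ∈ U(p,q), and the unique positive definite square root √(𝒜*𝒜) of 𝒜*𝒜 (encoded by
`hS : S.PosDef` and `hSS : S * S = 𝒜ᴴ * 𝒜`) also lies in U(p,q). -/
theorem indefinite_unitary_closed_under_star_and_sqrt {p q : ℕ} (hp : 1 ≤ p) (hq : 1 ≤ q)
    (𝒜 : Matrix (Fin p ⊕ Fin q) (Fin p ⊕ Fin q) ℂ)
    (h𝒜 : 𝒜ᴴ * Ipq p q * 𝒜 = Ipq p q) :
    (𝒜ᴴ)ᴴ * Ipq p q * 𝒜ᴴ = Ipq p q ∧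
    𝒜 * Ipq p q * 𝒜ᴴ = Ipq p q ∧
    (𝒜ᴴ * 𝒜)ᴴ * Ipq p q * (𝒜ᴴ * 𝒜) = Ipq p q ∧
    ∀ S : Matrix (Fin p ⊕ Fin q) (Fin p ⊕ Fin q) ℂ, S.PosDef → S * S = 𝒜ᴴ * 𝒜 →
      Sᴴ * Ipq p q * S = Ipq p q :=
  indefinite_unitary_closed_under_star_and_sqrt_general 𝒜 h𝒜
end

section
/- Let a > b > 0, let E = {(x,y) ∈ ℝ² : x²/a² + y²/b² = 1} be the ellipse, and let f : ℝ² → ℝ be the squared Euclidean distance to E, f(p) = (dist(p,E))². At the point P₀ = ((a²−b²)/a, 0), f is differentiable with derivative the linear map (α,β) ↦ −(2b²/a)·α, but f is not twice differentiable at P₀: the derivative map p ↦ Df_p is not differentiable at P₀. -/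
/-!
If `y` is the unique nearest point of a compact set `E` to `x`, then `infDist · E ^ 2` is
differentiable at `x` with derivative `2 ⟪x - y, ·⟫`: the squared distance to `y` bounds it from
above, and since nearest points of points close to `x` are close to `y` (by compactness), the
squared distance to them bounds it from below. If instead `x` has two nearest points, each of
them gives a smooth upper bound that touches `infDist · E ^ 2` at `x`, which would force two
different derivatives.

For the ellipse, the vertex `(a, 0)` is the unique nearest point to `P₀`, whereas every `(x, 0)`
with `|x| < (a² - b²) / a` has two nearest points, mirror images in the major axis. So the
derivative vanishes on that open segment but not at its endpoint `P₀`, and it is not even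
continuous at `P₀`.
-/

open Metric Filter Topology
open scoped RealInnerProductSpace

section MetricSpace

variable {α : Type*} [PseudoMetricSpace α] {s : Set α} {x y : α}

theorem Metric.infDist_eq_dist_of_forall_le (hy : y ∈ s) (h : ∀ z ∈ s, dist x y ≤ dist x z) :
    infDist x s = dist x y :=
  le_antisymm (infDist_le_dist_of_mem hy) ((le_infDist ⟨y, hy⟩).2 h)

theorem IsCompact.exists_pos_add_le_dist (hs : IsCompact s)
    (huniq : ∀ z ∈ s, infDist x s = dist x z → z = y) {ε : ℝ} (hε : 0 < ε) :
    ∃ η > 0, ∀ z ∈ s, ε ≤ dist z y → infDist x s + η ≤ dist x z := by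
  set K := s ∩ {z | ε ≤ dist z y}
  have hK : IsCompact K :=
    hs.inter_right (isClosed_le continuous_const (continuous_id.dist continuous_const))
  rcases K.eq_empty_or_nonempty with hK₀ | hK₀
  · exact ⟨1, one_pos, fun z hz hzy => (Set.eq_empty_iff_forall_notMem.1 hK₀ z ⟨hz, hzy⟩).elim⟩
  obtain ⟨z₀, ⟨hz₀, hz₀y⟩, hmin⟩ :=
    hK.exists_isMinOn hK₀ (continuous_const.dist continuous_id : Continuous (dist x)).continuousOn
  have hlt : infDist x s < dist x z₀ := by
    refine (infDist_le_dist_of_mem hz₀).lt_of_ne fun h => hε.not_ge ?_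
    simpa only [huniq z₀ hz₀ h, Set.mem_ofPred_eq, dist_self] using hz₀y
  exact ⟨dist x z₀ - infDist x s, sub_pos.2 hlt, fun z hz hzy => by
    linarith [show dist x z₀ ≤ dist x z from hmin ⟨hz, hzy⟩]⟩

theorem IsCompact.dist_lt_of_infDist_eq_dist (hs : IsCompact s)
    (huniq : ∀ z ∈ s, infDist x s = dist x z → z = y) {ε : ℝ} (hε : 0 < ε) :
    ∃ δ > 0, ∀ x' z, dist x' x < δ → z ∈ s → infDist x' s = dist x' z → dist z y < ε := by
  obtain ⟨η, hη, hgap⟩ := hs.exists_pos_add_le_dist huniq hε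
  refine ⟨η / 2, half_pos hη, fun x' z hx' hz hx'z => not_le.1 fun hzy => ?_⟩
  have hfar := hgap z hz hzy
  have hnear : dist x z ≤ infDist x s + 2 * dist x' x := by
    linarith [dist_triangle_left x z x', infDist_le_infDist_add_dist (x := x') (y := x) (s := s)]
  linarith

end MetricSpace

section InnerProductSpace

variable {F : Type*} [NormedAddCommGroup F] [InnerProductSpace ℝ F] {E : Set F}

theorem abs_infDist_sq_sub_le {x y z h : F} (hy : y ∈ E) (hxy : infDist x E = dist x y)
    (hz : z ∈ E) (hxz : infDist (x + h) E = dist (x + h) z) :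
    |infDist (x + h) E ^ 2 - infDist x E ^ 2 - 2 * ⟪x - y, h⟫| ≤
      ‖h‖ ^ 2 + 2 * dist z y * ‖h‖ := by
  have hz_near : ‖x + h - z‖ ^ 2 ≤ ‖x + h - y‖ ^ 2 := by
    simp only [← dist_eq_norm, ← hxz]
    exact pow_le_pow_left₀ infDist_nonneg (infDist_le_dist_of_mem hy) 2
  have hy_near : ‖x - y‖ ^ 2 ≤ ‖x - z‖ ^ 2 := by
    simp only [← dist_eq_norm, ← hxy]
    exact pow_le_pow_left₀ infDist_nonneg (infDist_le_dist_of_mem hz) 2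
  have hexp (w : F) : ‖x + h - w‖ ^ 2 = ‖x - w‖ ^ 2 + 2 * ⟪x - w, h⟫ + ‖h‖ ^ 2 := by
    rw [← norm_add_sq_real, sub_add_eq_add_sub]
  have hinner : ⟪x - z, h⟫ = ⟪x - y, h⟫ + ⟪y - z, h⟫ := by
    rw [← inner_add_left, sub_add_sub_cancel]
  have hcs : |⟪y - z, h⟫| ≤ dist z y * ‖h‖ := by
    rw [dist_eq_norm, norm_sub_rev]; exact abs_real_inner_le_norm _ _
  rw [hexp, hexp] at hz_near
  rw [hxz, hxy, dist_eq_norm, dist_eq_norm, hexp, abs_le]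
  constructor <;> nlinarith [abs_le.1 hcs, norm_nonneg h, dist_nonneg (x := z) (y := y)]

theorem IsCompact.hasFDerivAt_infDist_sq (hE : IsCompact E) {x y : F} (hy : y ∈ E)
    (hxy : infDist x E = dist x y) (huniq : ∀ z ∈ E, infDist x E = dist x z → z = y) :
    HasFDerivAt (fun p => infDist p E ^ 2) (2 • innerSL ℝ (x - y)) x := by
  rw [hasFDerivAt_iff_isLittleO_nhds_zero, Asymptotics.isLittleO_iff]
  intro c hc
  obtain ⟨δ, hδ, hnear⟩ := hE.dist_lt_of_infDist_eq_dist huniq (div_pos hc four_pos)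
  filter_upwards [ball_mem_nhds 0 (lt_min hδ (half_pos hc))] with h hh
  rw [mem_ball_zero_iff, lt_min_iff] at hh
  obtain ⟨z, hz, hxz⟩ := hE.exists_infDist_eq_dist ⟨y, hy⟩ (x + h)
  have hzy := hnear (x + h) z (by simpa [dist_self_add_left] using hh.1) hz hxz
  have hest := abs_infDist_sq_sub_le hy hxy hz hxz
  simp only [smul_apply, coe_innerSL_apply, nsmul_eq_mul, Nat.cast_ofNat, Real.norm_eq_abs]
  refine hest.trans ?_
  nlinarith [norm_nonneg h, dist_nonneg (x := z) (y := y)]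

theorem HasFDerivAt.eq_two_smul_innerSL_of_infDist_eq_dist {x y : F} {D : F →L[ℝ] ℝ}
    (hD : HasFDerivAt (fun p => infDist p E ^ 2) D x) (hy : y ∈ E)
    (hxy : infDist x E = dist x y) : D = 2 • innerSL ℝ (x - y) := by
  have hmin : IsLocalMin (fun p => ‖p - y‖ ^ 2 - infDist p E ^ 2) x :=
    Eventually.of_forall fun p => by
      simp only [hxy, ← dist_eq_norm, sub_self, sub_nonneg]
      exact pow_le_pow_left₀ infDist_nonneg (infDist_le_dist_of_mem hy) 2
  have hderiv := ((hasFDerivAt_id x).sub_const y).norm_sq.sub hD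
  rw [hmin.hasFDerivAt_eq_zero hderiv |> sub_eq_zero.1 |>.symm]
  rfl

theorem not_differentiableAt_infDist_sq_of_ne {x y z : F} (hy : y ∈ E) (hz : z ∈ E)
    (hxy : infDist x E = dist x y) (hxz : infDist x E = dist x z) (hyz : y ≠ z) :
    ¬ DifferentiableAt ℝ (fun p => infDist p E ^ 2) x := fun hd => by
  have h := (hd.hasFDerivAt.eq_two_smul_innerSL_of_infDist_eq_dist hy hxy).symm.trans
    (hd.hasFDerivAt.eq_two_smul_innerSL_of_infDist_eq_dist hz hxz)
  rw [← map_nsmul, ← map_nsmul, innerSL_inj, ← Nat.cast_smul_eq_nsmul ℝ,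
    ← Nat.cast_smul_eq_nsmul ℝ, (smul_right_injective F (by norm_num)).eq_iff, sub_right_inj] at h
  exact hyz h

end InnerProductSpace

def ellipse (a b : ℝ) : Set (EuclideanSpace ℝ (Fin 2)) :=
  {p | p 0 ^ 2 / a ^ 2 + p 1 ^ 2 / b ^ 2 = 1}

section Ellipse

variable {a b : ℝ}

theorem mem_ellipse_iff {p : EuclideanSpace ℝ (Fin 2)} :
    p ∈ ellipse a b ↔ p 0 ^ 2 / a ^ 2 + p 1 ^ 2 / b ^ 2 = 1 := Iff.rfl

theorem EuclideanSpace.dist_sq_fin_two (p q : EuclideanSpace ℝ (Fin 2)) :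
    dist p q ^ 2 = (p 0 - q 0) ^ 2 + (p 1 - q 1) ^ 2 := by
  simp [EuclideanSpace.dist_sq_eq, Fin.sum_univ_two, Real.dist_eq, sq_abs]

theorem isCompact_ellipse (ha : a ≠ 0) (hb : b ≠ 0) : IsCompact (ellipse a b) := by
  refine isCompact_of_isClosed_isBounded (isClosed_eq (by fun_prop) continuous_const) ?_
  refine isBounded_iff_forall_norm_le.2 ⟨|a| + |b|, fun p hp => ?_⟩
  rw [mem_ellipse_iff] at hp
  have h₀ : p 0 ^ 2 ≤ a ^ 2 := by
    rw [← div_le_one (by positivity)]; linarith [div_nonneg (sq_nonneg (p 1)) (sq_nonneg b)]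
  have h₁ : p 1 ^ 2 ≤ b ^ 2 := by
    rw [← div_le_one (by positivity)]; linarith [div_nonneg (sq_nonneg (p 0)) (sq_nonneg a)]
  rw [← pow_le_pow_iff_left₀ (norm_nonneg p) (by positivity) two_ne_zero,
    EuclideanSpace.real_norm_sq_eq, Fin.sum_univ_two]
  nlinarith [sq_abs a, sq_abs b, abs_nonneg a, abs_nonneg b]

/-- Completing the square in `q 0` after eliminating `q 1` with the equation of the ellipse. -/
theorem dist_sq_of_mem_ellipse (hb : 0 < b) (hab : b < a) (x : ℝ) {q : EuclideanSpace ℝ (Fin 2)}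
    (hq : q ∈ ellipse a b) :
    dist !₂[x, 0] q ^ 2 = b ^ 2 - b ^ 2 * x ^ 2 / (a ^ 2 - b ^ 2) +
      (a ^ 2 - b ^ 2) / a ^ 2 * (q 0 - a ^ 2 * x / (a ^ 2 - b ^ 2)) ^ 2 := by
  have hc : a ^ 2 - b ^ 2 ≠ 0 := by nlinarith
  have ha : a ≠ 0 := (hb.trans hab).ne'
  rw [mem_ellipse_iff] at hq
  have hq₁ : q 1 ^ 2 = b ^ 2 - b ^ 2 * q 0 ^ 2 / a ^ 2 := by
    field_simp at hq ⊢; linarith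
  rw [EuclideanSpace.dist_sq_fin_two]
  simp only [Matrix.cons_val_zero, Matrix.cons_val_one, zero_sub, neg_sq, hq₁]
  field_simp
  ring

theorem infDist_ellipse_eq_dist (hb : 0 < b) (hab : b < a) {x : ℝ}
    {q : EuclideanSpace ℝ (Fin 2)} (hq : q ∈ ellipse a b)
    (hq₀ : q 0 = a ^ 2 * x / (a ^ 2 - b ^ 2)) :
    infDist !₂[x, 0] (ellipse a b) = dist !₂[x, 0] q := by
  have hc : 0 < (a ^ 2 - b ^ 2) / a ^ 2 := by
    have := hb.trans hab; apply div_pos <;> nlinarith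
  refine infDist_eq_dist_of_forall_le hq fun z hz => ?_
  rw [← pow_le_pow_iff_left₀ dist_nonneg dist_nonneg two_ne_zero,
    dist_sq_of_mem_ellipse hb hab x hq, dist_sq_of_mem_ellipse hb hab x hz, hq₀, sub_self]
  nlinarith [sq_nonneg (z 0 - a ^ 2 * x / (a ^ 2 - b ^ 2))]

theorem vertex_mem_ellipse (ha : a ≠ 0) : !₂[a, 0] ∈ ellipse a b := by
  simp [mem_ellipse_iff, ha]

theorem eq_vertex_of_infDist_ellipse_eq_dist (hb : 0 < b) (hab : b < a)
    {q : EuclideanSpace ℝ (Fin 2)} (hq : q ∈ ellipse a b)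
    (h : infDist !₂[(a ^ 2 - b ^ 2) / a, 0] (ellipse a b) = dist !₂[(a ^ 2 - b ^ 2) / a, 0] q) :
    q = !₂[a, 0] := by
  have ha : 0 < a := hb.trans hab
  have hc : 0 < a ^ 2 - b ^ 2 := by nlinarith
  have hu : a ^ 2 * ((a ^ 2 - b ^ 2) / a) / (a ^ 2 - b ^ 2) = a := by field_simp
  have hA := infDist_ellipse_eq_dist hb hab (vertex_mem_ellipse ha.ne') (by simpa using hu.symm)
  have hsq := congrArg (· ^ 2) (h.symm.trans hA)
  simp only [dist_sq_of_mem_ellipse hb hab _ hq, dist_sq_of_mem_ellipse hb hab _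
    (vertex_mem_ellipse ha.ne'), hu] at hsq
  have hq₀ : q 0 = a := by
    have hμ : (a ^ 2 - b ^ 2) / a ^ 2 ≠ 0 := by positivity
    simpa [hμ, sub_eq_zero] using hsq
  have hq₁ : q 1 = 0 := by
    rw [mem_ellipse_iff, hq₀, div_self (by positivity)] at hq
    simpa [hb.ne'] using hq
  ext i; fin_cases i <;> simp [hq₀, hq₁]

theorem hasFDerivAt_infDist_sq_ellipse (hb : 0 < b) (hab : b < a) :
    HasFDerivAt (fun p => infDist p (ellipse a b) ^ 2)
      (2 • innerSL ℝ (!₂[(a ^ 2 - b ^ 2) / a, 0] - !₂[a, 0])) !₂[(a ^ 2 - b ^ 2) / a, 0] := by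
  have ha : 0 < a := hb.trans hab
  have hc : 0 < a ^ 2 - b ^ 2 := by nlinarith
  refine (isCompact_ellipse ha.ne' hb.ne').hasFDerivAt_infDist_sq (vertex_mem_ellipse ha.ne')
    (infDist_ellipse_eq_dist hb hab (vertex_mem_ellipse ha.ne') ?_)
    fun q hq h => eq_vertex_of_infDist_ellipse_eq_dist hb hab hq h
  simp only [Matrix.cons_val_zero]
  field_simp

/-- The two points of the ellipse with abscissa `a ^ 2 * x / (a ^ 2 - b ^ 2)` are both nearest
to `(x, 0)`. -/
theorem not_differentiableAt_infDist_sq_ellipse (hb : 0 < b) (hab : b < a) {x : ℝ}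
    (hx : |x| < (a ^ 2 - b ^ 2) / a) :
    ¬ DifferentiableAt ℝ (fun p => infDist p (ellipse a b) ^ 2) !₂[x, 0] := by
  have ha : 0 < a := hb.trans hab
  have hc : 0 < a ^ 2 - b ^ 2 := by nlinarith
  set u := a ^ 2 * x / (a ^ 2 - b ^ 2)
  have hu : u ^ 2 < a ^ 2 := by
    rw [← sq_abs, sq_lt_sq₀ (abs_nonneg u) ha.le, abs_div, abs_mul, abs_of_pos hc, abs_sq,
      div_lt_iff₀ hc]
    rw [lt_div_iff₀ ha] at hx
    nlinarith
  set v := b * √(1 - u ^ 2 / a ^ 2)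
  have hv : 0 < v :=
    mul_pos hb (Real.sqrt_pos.2 (by rwa [sub_pos, div_lt_one (by positivity)]))
  have hmem {w : ℝ} (hw : w ^ 2 = v ^ 2) : !₂[u, w] ∈ ellipse a b := by
    rw [mem_ellipse_iff]
    simp only [Matrix.cons_val_zero, Matrix.cons_val_one, hw, v, mul_pow,
      Real.sq_sqrt (sub_nonneg.2 ((div_le_one (by positivity)).2 hu.le))]
    field_simp
    ring
  refine not_differentiableAt_infDist_sq_of_ne (hmem rfl) (hmem (neg_sq v))
    (infDist_ellipse_eq_dist hb hab (hmem rfl) (by simp [u]))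
    (infDist_ellipse_eq_dist hb hab (hmem (neg_sq v)) (by simp [u])) fun h => ?_
  have := congrArg (· 1) h
  simp only [Matrix.cons_val_one, Matrix.cons_val_zero] at this
  linarith

end Ellipse

/-- Let a > b > 0 and let E be the ellipse x²/a² + y²/b² = 1 in the Euclidean
plane.  Let f be the squared distance to E.  At P₀ = ((a²−b²)/a, 0), f is differentiable with
derivative the linear map (α,β) ↦ −(2b²/a)·α, but f is not twice differentiable at P₀: the map
p ↦ Df_p is not differentiable at P₀. -/
theorem ellipse_dist_sq_differentiable_not_twice (a b : ℝ) (hb : 0 < b) (hab : b < a) :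
    letI E : Set (EuclideanSpace ℝ (Fin 2)) :=
      {p | (p 0) ^ 2 / a ^ 2 + (p 1) ^ 2 / b ^ 2 = 1}
    letI f : EuclideanSpace ℝ (Fin 2) → ℝ := fun p => (Metric.infDist p E) ^ 2
    letI P₀ : EuclideanSpace ℝ (Fin 2) :=
      (EuclideanSpace.equiv (Fin 2) ℝ).symm ![(a ^ 2 - b ^ 2) / a, 0]
    (∃ L : EuclideanSpace ℝ (Fin 2) →L[ℝ] ℝ,
      HasFDerivAt f L P₀ ∧ ∀ v : EuclideanSpace ℝ (Fin 2), L v = -(2 * b ^ 2 / a) * v 0) ∧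
    ¬ DifferentiableAt ℝ (fderiv ℝ f) P₀ := by
  set f := fun p : EuclideanSpace ℝ (Fin 2) => infDist p (ellipse a b) ^ 2
  set P₀ : EuclideanSpace ℝ (Fin 2) := !₂[(a ^ 2 - b ^ 2) / a, 0]
  show (∃ L, HasFDerivAt f L P₀ ∧ ∀ v, L v = -(2 * b ^ 2 / a) * v 0) ∧
    ¬ DifferentiableAt ℝ (fderiv ℝ f) P₀
  have ha : 0 < a := hb.trans hab
  have hx₀ : 0 < (a ^ 2 - b ^ 2) / a := div_pos (by nlinarith) ha
  have hf : HasFDerivAt f _ P₀ := hasFDerivAt_infDist_sq_ellipse hb hab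
  have hL (v : EuclideanSpace ℝ (Fin 2)) :
      (2 • innerSL ℝ (!₂[(a ^ 2 - b ^ 2) / a, 0] - !₂[a, 0])) v = -(2 * b ^ 2 / a) * v 0 := by
    simp only [smul_apply, coe_innerSL_apply, nsmul_eq_mul, PiLp.inner_apply, Fin.sum_univ_two,
      RCLike.inner_apply, Real.ringHom_apply, PiLp.sub_apply, Matrix.cons_val_zero,
      Matrix.cons_val_one, sub_zero, mul_zero, add_zero]
    field_simp
    ring
  refine ⟨⟨_, hf, hL⟩, fun hdiff => ?_⟩
  have hlim : Tendsto (fun t : ℝ => fderiv ℝ f !₂[t, 0]) (𝓝[<] ((a ^ 2 - b ^ 2) / a))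
      (𝓝 (fderiv ℝ f P₀)) :=
    (hdiff.continuousAt.tendsto.comp
      (by fun_prop : Continuous fun t : ℝ => !₂[t, 0]).continuousAt).mono_left nhdsWithin_le_nhds
  have hzero : (fun t : ℝ => fderiv ℝ f !₂[t, 0]) =ᶠ[𝓝[<] ((a ^ 2 - b ^ 2) / a)] fun _ => 0 := by
    filter_upwards [Ioo_mem_nhdsLT hx₀] with t ht
    exact fderiv_zero_of_not_differentiableAt
      (not_differentiableAt_infDist_sq_ellipse hb hab (abs_lt.2 ⟨by linarith [ht.1], ht.2⟩))
  have h0 := tendsto_nhds_unique (hlim.congr' hzero) tendsto_const_nhds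
  have hslope := hL (EuclideanSpace.single 0 1)
  rw [← hf.fderiv, h0] at hslope
  simp only [zero_apply, PiLp.single_eq_same, mul_one, zero_eq_neg] at hslope
  exact (by positivity : 0 < 2 * b ^ 2 / a).ne' hslope
end
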